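/- arXiv:2412.19344 — 7 statements merged into one kernel-verified Lean document; each statement's English description precedes it below -/
import Mathlib

section
/- If R is a commutative Noetherian domain, then the Krull dimension of R (defined as the supremum of lengths of chains of prime ideals) equals the Krull dimension of R as a module over itself (defined via the deviation of the poset of ideals). -/
open Filter in
/-- `DevLE β α inst` means the deviation of the poset `α` is at most `β`:
in every descending chain, all but finitely many intervals are trivial or
have deviation strictly less than `β`. -/
noncomputable def DevLE : Ordinal.{0} → (α : Type) → Preorder α → Prop :=
  WellFounded.fix Ordinal.lt_wf (fun β ih α inst =>
    letI := inst
    ∀ f : ℕ → α, (∀ n, f (n + 1) ≤ f n) →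
      ∀ᶠ n in atTop,
        Subsingleton (Set.Icc (f (n + 1)) (f n)) ∨
        ∃ γ, ∃ h : γ < β, ih γ h (Set.Icc (f (n + 1)) (f n)) inferInstance)

/-- The poset `α` has deviation. -/
def HasDev (α : Type) [i : Preorder α] : Prop := ∃ β, DevLE β α i

open Classical in
/-- The deviation of a poset: `⊥` for a trivial poset, otherwise the least `β`
with `DevLE β` (junk value `⊥` if no deviation exists). -/
noncomputable def deviation (α : Type) [i : Preorder α] : WithBot Ordinal.{0} :=
  if Subsingleton α ∨ ¬ HasDev α then ⊥ else ↑(sInf {β | DevLE β α i})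

open Filter in
theorem DevLE_iff (β : Ordinal.{0}) (α : Type) [inst : Preorder α] :
    DevLE β α inst ↔
    ∀ f : ℕ → α, (∀ n, f (n + 1) ≤ f n) →
      ∀ᶠ n in atTop,
        Subsingleton (Set.Icc (f (n + 1)) (f n)) ∨
        ∃ γ, γ < β ∧ DevLE γ (Set.Icc (f (n + 1)) (f n)) inferInstance := by
  rw [DevLE, WellFounded.fix_eq]
  simp only [exists_prop]

theorem DevLE.mono {β β' : Ordinal.{0}} (h : β ≤ β') {α : Type} [inst : Preorder α]
    (hd : DevLE β α inst) : DevLE β' α inst := by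
  rw [DevLE_iff] at hd ⊢
  intro f hf
  filter_upwards [hd f hf] with n hn
  rcases hn with h1 | ⟨γ, hγ, h2⟩
  · exact Or.inl h1
  · exact Or.inr ⟨γ, lt_of_lt_of_le hγ h, h2⟩

theorem DevLE.of_subsingleton {β : Ordinal.{0}} {α : Type} [inst : Preorder α]
    (h : Subsingleton α) : DevLE β α inst := by
  rw [DevLE_iff]
  intro f hf
  refine Filter.Eventually.of_forall (fun n => Or.inl ?_)
  exact ⟨fun a b => Subtype.ext (h.elim a.1 b.1)⟩

/-- Transfer of `DevLE` along a monotone injection. -/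
theorem DevLE.of_monoInj (β : Ordinal.{0}) : ∀ {α δ : Type} [PartialOrder α] [PartialOrder δ]
    (g : α → δ), Monotone g → Function.Injective g →
    DevLE β δ inferInstance → DevLE β α inferInstance := by
  induction β using Ordinal.induction with
  | h β IH =>
    intro α δ _ _ g hmono hinj hd
    rw [DevLE_iff] at hd ⊢
    intro f hf
    have := hd (fun n => g (f n)) (fun n => hmono (hf n))
    filter_upwards [this] with n hn
    set g' : Set.Icc (f (n+1)) (f n) → Set.Icc (g (f (n+1))) (g (f n)) :=
      fun x => ⟨g x.1, hmono x.2.1, hmono x.2.2⟩ with hg'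
    have hg'mono : Monotone g' := fun a b hab => hmono hab
    have hg'inj : Function.Injective g' := by
      intro a b hab
      exact Subtype.ext (hinj (congrArg Subtype.val hab))
    rcases hn with h1 | ⟨γ, hγ, h2⟩
    · refine Or.inl ⟨fun a b => hg'inj (h1.elim _ _)⟩
    · exact Or.inr ⟨γ, hγ, IH γ hγ g' hg'mono hg'inj h2⟩

/-- A descending chain all of whose intervals are "big" rules out `DevLE β`. -/
theorem not_devLE_of_chain {α : Type} [PartialOrder α] {β : Ordinal.{0}}
    (f : ℕ → α) (hf : ∀ n, f (n + 1) ≤ f n)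
    (h : ∀ n, ¬ Subsingleton (Set.Icc (f (n + 1)) (f n)) ∧
      ∀ γ < β, ¬ DevLE γ (Set.Icc (f (n + 1)) (f n)) inferInstance) :
    ¬ DevLE β α inferInstance := by
  intro hd
  rw [DevLE_iff] at hd
  rcases (hd f hf).exists with ⟨n, hn⟩
  rcases hn with h1 | ⟨γ, hγ, h2⟩
  · exact (h n).1 h1
  · exact (h n).2 γ hγ h2

theorem subsingleton_Icc_self {α : Type} [PartialOrder α] (a : α) :
    Subsingleton (Set.Icc a a) := by
  refine ⟨fun x y => Subtype.ext ?_⟩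
  have hx : x.1 = a := le_antisymm x.2.2 x.2.1
  have hy : y.1 = a := le_antisymm y.2.2 y.2.1
  rw [hx, hy]

/-- Transfer of `DevLE` on an interval along a monotone injection defined on the interval. -/
theorem DevLE.icc_of_monoInj {α δ : Type} [PartialOrder α] [PartialOrder δ]
    {β : Ordinal.{0}} {a b : α} {c d : δ} (g : Set.Icc a b → δ)
    (hmono : Monotone g) (hinj : Function.Injective g)
    (hmem : ∀ x, g x ∈ Set.Icc c d)
    (hd : DevLE β (Set.Icc c d) inferInstance) : DevLE β (Set.Icc a b) inferInstance := by
  exact DevLE.of_monoInj β (fun x => (⟨g x, hmem x⟩ : Set.Icc c d))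
    (fun x y hxy => hmono hxy) (fun x y hxy => hinj (congrArg Subtype.val hxy)) hd



section IccSubtype
variable {α : Type} [PartialOrder α] {s : Set α} {β : Ordinal.{0}}

theorem DevLE.icc_subtype_down (a b : ↥s)
    (h : DevLE β (Set.Icc a.1 b.1) inferInstance) : DevLE β (Set.Icc a b) inferInstance := by
  refine DevLE.of_monoInj β (fun x : Set.Icc a b => (⟨x.1.1, x.2.1, x.2.2⟩ : Set.Icc a.1 b.1))
    ?_ ?_ h
  · intro p q hpq
    exact Subtype.mk_le_mk.2 hpq
  · intro p q hpq
    have h2' := congrArg (fun z : Set.Icc a.1 b.1 => z.1) hpq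
    exact Subtype.ext (Subtype.ext h2')

theorem DevLE.icc_subtype_up (a b : ↥s) (hsub : Set.Icc a.1 b.1 ⊆ s)
    (h : DevLE β (Set.Icc a b) inferInstance) : DevLE β (Set.Icc a.1 b.1) inferInstance := by
  refine DevLE.of_monoInj β (fun y : Set.Icc a.1 b.1 =>
    (⟨⟨y.1, hsub y.2⟩, y.2.1, y.2.2⟩ : Set.Icc a b)) ?_ ?_ h
  · intro p q hpq
    exact Subtype.mk_le_mk.2 (Subtype.mk_le_mk.2 hpq)
  · intro p q hpq
    have h2' := congrArg (fun z : Set.Icc a b => z.1.1) hpq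
    exact Subtype.ext h2'

theorem sub_icc_subtype_down (a b : ↥s) (h : Subsingleton (Set.Icc a.1 b.1)) :
    Subsingleton (Set.Icc a b) := by
  refine ⟨fun p q => ?_⟩
  have := h.elim (⟨p.1.1, p.2.1, p.2.2⟩ : Set.Icc a.1 b.1) ⟨q.1.1, q.2.1, q.2.2⟩
  have h2' := congrArg (fun z : Set.Icc a.1 b.1 => z.1) this
  exact Subtype.ext (Subtype.ext h2')

theorem sub_icc_subtype_up (a b : ↥s) (hsub : Set.Icc a.1 b.1 ⊆ s)
    (h : Subsingleton (Set.Icc a b)) : Subsingleton (Set.Icc a.1 b.1) := by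
  refine ⟨fun p q => ?_⟩
  have := h.elim (⟨⟨p.1, hsub p.2⟩, p.2.1, p.2.2⟩ : Set.Icc a b)
    ⟨⟨q.1, hsub q.2⟩, q.2.1, q.2.2⟩
  have h2' := congrArg (fun z : Set.Icc a b => z.1.1) this
  exact Subtype.ext h2'

end IccSubtype

/-- The splitting lemma: if `a ≤ m ≤ b` in a modular lattice and the intervals
`[a, m]`, `[m, b]` both have deviation at most `β`, then so does `[a, b]`. -/
theorem DevLE.split (β : Ordinal.{0}) : ∀ (L : Type) [Lattice L] [IsModularLattice L]
    (a m b : L), a ≤ m → m ≤ b →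
    DevLE β (Set.Icc a m) inferInstance → DevLE β (Set.Icc m b) inferInstance →
    DevLE β (Set.Icc a b) inferInstance := by
  induction β using Ordinal.induction with
  | h β IH =>
    intro L _ _ a m b ham hmb h1 h2
    rw [DevLE_iff] at h1 h2 ⊢
    intro f hf
    have hfv : ∀ n, (f (n+1)).1 ≤ (f n).1 := fun n => hf n
    set u : ℕ → Set.Icc a m := fun k =>
      ⟨(f k).1 ⊓ m, le_inf ((f k).2.1) ham, inf_le_right⟩ with hu
    set v : ℕ → Set.Icc m b := fun k =>
      ⟨(f k).1 ⊔ m, le_sup_right, sup_le ((f k).2.2) hmb⟩ with hv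
    have hud : ∀ n, u (n+1) ≤ u n := by
      intro n
      show (f (n+1)).1 ⊓ m ≤ (f n).1 ⊓ m
      exact inf_le_inf_right m (hfv n)
    have hvd : ∀ n, v (n+1) ≤ v n := by
      intro n
      show (f (n+1)).1 ⊔ m ≤ (f n).1 ⊔ m
      exact sup_le_sup_right (hfv n) m
    filter_upwards [h1 u hud, h2 v hvd] with k hk1 hk2
    set x1 : L := (f (k+1)).1 with hx1def
    set x0 : L := (f k).1 with hx0def
    have hx10 : x1 ≤ x0 := hfv k
    have hax1 : a ≤ x1 := (f (k+1)).2.1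
    have hx0b : x0 ≤ b := (f k).2.2
    set d : L := x1 ⊔ (x0 ⊓ m) with hd
    have hx1d : x1 ≤ d := le_sup_left
    have hdx0 : d ≤ x0 := sup_le hx10 inf_le_left
    have hsub1 : Set.Icc ((u (k+1)).1) ((u k).1) ⊆ Set.Icc a m := fun y hy =>
      ⟨le_trans (u (k+1)).2.1 hy.1, le_trans hy.2 (u k).2.2⟩
    have hsub2 : Set.Icc ((v (k+1)).1) ((v k).1) ⊆ Set.Icc m b := fun y hy =>
      ⟨le_trans (v (k+1)).2.1 hy.1, le_trans hy.2 (v k).2.2⟩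
    have hk1' : Subsingleton (Set.Icc (x1 ⊓ m) (x0 ⊓ m)) ∨
        ∃ γ, γ < β ∧ DevLE γ (Set.Icc (x1 ⊓ m) (x0 ⊓ m)) inferInstance := by
      rcases hk1 with hs | ⟨γ, hγ, hγd⟩
      · exact Or.inl (sub_icc_subtype_up (u (k+1)) (u k) hsub1 hs)
      · exact Or.inr ⟨γ, hγ, DevLE.icc_subtype_up (u (k+1)) (u k) hsub1 hγd⟩
    have hk2' : Subsingleton (Set.Icc (x1 ⊔ m) (x0 ⊔ m)) ∨
        ∃ γ, γ < β ∧ DevLE γ (Set.Icc (x1 ⊔ m) (x0 ⊔ m)) inferInstance := by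
      rcases hk2 with hs | ⟨γ, hγ, hγd⟩
      · exact Or.inl (sub_icc_subtype_up (v (k+1)) (v k) hsub2 hs)
      · exact Or.inr ⟨γ, hγ, DevLE.icc_subtype_up (v (k+1)) (v k) hsub2 hγd⟩
    clear hk1 hk2
    have hdm : d ⊓ m = x0 ⊓ m := by
      rw [hd, sup_comm, sup_inf_assoc_of_le x1 (inf_le_right : x0 ⊓ m ≤ m)]
      exact sup_eq_left.2 (inf_le_inf_right m hx10)
    have det1 : ∀ x : Set.Icc x1 d, x.1 = x1 ⊔ (x.1 ⊓ m) := by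
      intro x
      have hxx0 : x.1 ≤ x0 := le_trans x.2.2 hdx0
      calc x.1 = d ⊓ x.1 := (inf_eq_right.2 x.2.2).symm
        _ = (x1 ⊔ (x0 ⊓ m)) ⊓ x.1 := rfl
        _ = x1 ⊔ ((x0 ⊓ m) ⊓ x.1) := sup_inf_assoc_of_le _ x.2.1
        _ = x1 ⊔ (x.1 ⊓ m) := by rw [inf_right_comm, inf_eq_right.2 hxx0]
    have det2 : ∀ x : Set.Icc d x0, x.1 = x0 ⊓ (x.1 ⊔ m) := by
      intro x
      have hdx : d ≤ x.1 := x.2.1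
      calc x.1 = x.1 ⊔ (x0 ⊓ m) := (sup_eq_left.2 (le_trans le_sup_right hdx)).symm
        _ = x.1 ⊔ (m ⊓ x0) := by rw [inf_comm]
        _ = (x.1 ⊔ m) ⊓ x0 := (sup_inf_assoc_of_le m x.2.2).symm
        _ = x0 ⊓ (x.1 ⊔ m) := inf_comm _ _
    have emb1 : ∀ x : Set.Icc x1 d, x.1 ⊓ m ∈ Set.Icc (x1 ⊓ m) (x0 ⊓ m) :=
      fun x => ⟨inf_le_inf_right m x.2.1, hdm ▸ inf_le_inf_right m x.2.2⟩
    have emb2 : ∀ x : Set.Icc d x0, x.1 ⊔ m ∈ Set.Icc (x1 ⊔ m) (x0 ⊔ m) := by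
      intro x
      refine ⟨?_, sup_le_sup_right x.2.2 m⟩
      exact le_trans (sup_le_sup_right hx1d m) (sup_le_sup_right x.2.1 m)
    have inj1 : Function.Injective (fun x : Set.Icc x1 d => x.1 ⊓ m) := by
      intro p q hpq
      have hpq' : p.1 ⊓ m = q.1 ⊓ m := hpq
      exact Subtype.ext ((det1 p).trans (by rw [hpq']; exact (det1 q).symm))
    have inj2 : Function.Injective (fun x : Set.Icc d x0 => x.1 ⊔ m) := by
      intro p q hpq
      have hpq' : p.1 ⊔ m = q.1 ⊔ m := hpq
      exact Subtype.ext ((det2 p).trans (by rw [hpq']; exact (det2 q).symm))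
    have mono1 : Monotone (fun x : Set.Icc x1 d => x.1 ⊓ m) := by
      intro p q hpq
      show p.1 ⊓ m ≤ q.1 ⊓ m
      exact inf_le_inf_right m hpq
    have mono2 : Monotone (fun x : Set.Icc d x0 => x.1 ⊔ m) := by
      intro p q hpq
      show p.1 ⊔ m ≤ q.1 ⊔ m
      exact sup_le_sup_right (show p.1 ≤ q.1 from hpq) m
    -- from the two subinterval facts, conclude for `[x1, x0]`
    have key : ∀ γ₃, γ₃ < β → DevLE γ₃ (Set.Icc (x1 ⊓ m) (x0 ⊓ m)) inferInstance →
        DevLE γ₃ (Set.Icc (x1 ⊔ m) (x0 ⊔ m)) inferInstance →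
        ∃ γ, γ < β ∧ DevLE γ (Set.Icc x1 x0) inferInstance := by
      intro γ₃ h3 hA hB
      exact ⟨γ₃, h3, IH γ₃ h3 L x1 d x0 hx1d hdx0
        (DevLE.icc_of_monoInj _ mono1 inj1 emb1 hA)
        (DevLE.icc_of_monoInj _ mono2 inj2 emb2 hB)⟩
    have combine : Subsingleton (Set.Icc x1 x0) ∨
        ∃ γ, γ < β ∧ DevLE γ (Set.Icc x1 x0) inferInstance := by
      rcases hk1' with hs1 | ⟨γ₁, hγ₁, hd1⟩
      · rcases hk2' with hs2 | ⟨γ₂, hγ₂, hd2⟩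
        · left
          have e1 : x1 ⊓ m = x0 ⊓ m := congrArg Subtype.val
            (hs1.elim ⟨x1 ⊓ m, le_refl _, inf_le_inf_right m hx10⟩
              ⟨x0 ⊓ m, inf_le_inf_right m hx10, le_refl _⟩)
          have e2 : x1 ⊔ m = x0 ⊔ m := congrArg Subtype.val
            (hs2.elim ⟨x1 ⊔ m, le_refl _, sup_le_sup_right hx10 m⟩
              ⟨x0 ⊔ m, sup_le_sup_right hx10 m, le_refl _⟩)
          have e3 : x1 = x0 :=
            eq_of_le_of_inf_le_of_sup_le hx10 (le_of_eq e1.symm) (le_of_eq e2.symm)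
          rw [← e3]
          exact subsingleton_Icc_self x1
        · exact Or.inr (key γ₂ hγ₂ (DevLE.of_subsingleton hs1) hd2)
      · rcases hk2' with hs2 | ⟨γ₂, hγ₂, hd2⟩
        · exact Or.inr (key γ₁ hγ₁ hd1 (DevLE.of_subsingleton hs2))
        · exact Or.inr (key (max γ₁ γ₂) (max_lt hγ₁ hγ₂)
            (hd1.mono (le_max_left _ _)) (hd2.mono (le_max_right _ _)))
    rcases combine with hs | ⟨γ, hγ, hγd⟩
    · exact Or.inl (sub_icc_subtype_down (f (k+1)) (f k) hs)
    · exact Or.inr ⟨γ, hγ, DevLE.icc_subtype_down (f (k+1)) (f k) hγd⟩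

/-- A chain of primes of length `k` rules out `DevLE γ` for `γ < k`. -/
theorem chain_primes_not_devLE : ∀ (k : ℕ) (S : Type) [CommRing S] (p : ℕ → Ideal S),
    (∀ i ≤ k, (p i).IsPrime) → (∀ i < k, p (i+1) < p i) →
    ∀ γ : Ordinal.{0}, γ < (k : Ordinal) → ¬ DevLE γ (Ideal S) inferInstance := by
  intro k
  induction k with
  | zero =>
    intro S _ p _ _ γ hγ
    rw [Nat.cast_zero] at hγ
    exact absurd hγ not_lt_bot
  | succ k IH =>
    intro S _ p hprime hlt γ hγ hdev
    haveI hPk1 : (p (k+1)).IsPrime := hprime (k+1) le_rfl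
    set S' := S ⧸ p (k+1) with hS'
    set mk1 : S →+* S' := Ideal.Quotient.mk (p (k+1)) with hmk1
    have hmk1surj : Function.Surjective mk1 := Ideal.Quotient.mk_surjective
    -- antitonicity of the chain
    have panti : ∀ j, j ≤ k+1 → ∀ i, i ≤ j → p j ≤ p i := by
      intro j
      induction j with
      | zero =>
        intro _ i hi
        cases Nat.le_zero.mp hi
        exact le_rfl
      | succ j ihj =>
        intro hj i hi
        rcases Nat.lt_or_ge i (j+1) with h | h
        · exact le_trans (le_of_lt (hlt j (by omega))) (ihj (by omega) i (by omega))
        · have : i = j + 1 := by omega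
          rw [this]
    have hker1 : RingHom.ker mk1 = p (k+1) := Ideal.mk_ker
    set q : ℕ → Ideal S' := fun i => Ideal.map mk1 (p i) with hq
    have hqcomap : ∀ i ≤ k+1, Ideal.comap mk1 (q i) = p i := by
      intro i hi
      rw [hq]
      rw [Ideal.comap_map_of_surjective mk1 hmk1surj, ← RingHom.ker_eq_comap_bot, hker1]
      exact sup_eq_left.2 (panti (k+1) le_rfl i hi)
    have hqprime : ∀ i ≤ k+1, (q i).IsPrime := by
      intro i hi
      haveI := hprime i hi
      exact Ideal.map_isPrime_of_surjective hmk1surj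
        (by rw [hker1]; exact panti (k+1) le_rfl i hi)
    have hqlt : ∀ i < k+1, q (i+1) < q i := by
      intro i hi
      refine lt_of_le_of_ne (Ideal.map_mono (le_of_lt (hlt i hi))) ?_
      intro he
      have := congrArg (Ideal.comap mk1) he
      rw [hqcomap (i+1) (by omega), hqcomap i (by omega)] at this
      exact (hlt i hi).ne this
    -- a nonzero element of `q k`
    obtain ⟨y, hyk, hyk1⟩ := SetLike.exists_of_lt (hlt k (by omega))
    set x : S' := mk1 y with hx
    have hx0 : x ≠ 0 := fun h => hyk1 (Ideal.Quotient.eq_zero_iff_mem.1 h)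
    have hxq : x ∈ q k := Ideal.mem_map_of_mem mk1 hyk
    have hxqi : ∀ i ≤ k, x ∈ q i := fun i hi =>
      Ideal.map_mono (panti k (by omega) i hi) hxq
    -- the quotient by `x`
    set S'' := S' ⧸ Ideal.span {x} with hS''
    set mk2 : S' →+* S'' := Ideal.Quotient.mk (Ideal.span {x}) with hmk2
    have hmk2surj : Function.Surjective mk2 := Ideal.Quotient.mk_surjective
    have hker2 : RingHom.ker mk2 = Ideal.span {x} := Ideal.mk_ker
    have hspanle : ∀ i ≤ k, Ideal.span {x} ≤ q i := fun i hi =>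
      (Ideal.span_le).2 (Set.singleton_subset_iff.2 (hxqi i hi))
    set r : ℕ → Ideal S'' := fun i => Ideal.map mk2 (q (min i k)) with hr
    have hrprime : ∀ i ≤ k, (r i).IsPrime := by
      intro i _
      haveI := hqprime (min i k) (le_trans (min_le_right i k) (by omega))
      exact Ideal.map_isPrime_of_surjective hmk2surj
        (by rw [hker2]; exact hspanle (min i k) (min_le_right i k))
    have hrlt : ∀ i < k, r (i+1) < r i := by
      intro i hi
      rw [hr]
      simp only [min_eq_left (by omega : i + 1 ≤ k), min_eq_left (by omega : i ≤ k)]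
      refine lt_of_le_of_ne (Ideal.map_mono (le_of_lt (hqlt i (by omega)))) ?_
      intro he
      have := congrArg (Ideal.comap mk2) he
      rw [Ideal.comap_map_of_surjective mk2 hmk2surj, Ideal.comap_map_of_surjective mk2 hmk2surj,
        ← RingHom.ker_eq_comap_bot, hker2, sup_eq_left.2 (hspanle (i+1) (by omega)),
        sup_eq_left.2 (hspanle i (by omega))] at this
      exact (hqlt i (by omega)).ne this
    have IH' : ∀ γ' : Ordinal, γ' < (k : Ordinal) → ¬ DevLE γ' (Ideal S'') inferInstance :=
      IH S'' r hrprime hrlt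
    -- the chain of powers of x in S'
    haveI : IsDomain S' := Ideal.Quotient.isDomain (p (k+1))
    set f : ℕ → Ideal S' := fun n => Ideal.span {x ^ n} with hf
    have hfdesc : ∀ n, f (n+1) ≤ f n := by
      intro n
      rw [hf]
      refine (Ideal.span_le).2 (Set.singleton_subset_iff.2 ?_)
      exact Ideal.mem_span_singleton'.2 ⟨x, by rw [pow_succ, mul_comm]⟩
    have hxnne : ∀ n : ℕ, (x : S') ^ n ≠ 0 := fun n => pow_ne_zero n hx0
    have hfne : ∀ n, f (n+1) ≠ f n := by
      intro n he
      have hmem : x ^ n ∈ Ideal.span {x ^ (n+1)} := by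
        show x ^ n ∈ f (n+1)
        rw [he]
        exact Ideal.mem_span_singleton_self _
      obtain ⟨a, ha⟩ := Ideal.mem_span_singleton'.1 hmem
      have h2 : (a * x) * x ^ n = 1 * x ^ n := by
        rw [one_mul]
        calc (a * x) * x ^ n = a * x ^ (n+1) := by rw [pow_succ]; ring
          _ = x ^ n := ha
      have hax : a * x = 1 := mul_right_cancel₀ (hxnne n) h2
      have hux : IsUnit x := IsUnit.of_mul_eq_one a (by rw [mul_comm]; exact hax)
      exact (hqprime k (by omega)).ne_top (Ideal.eq_top_of_isUnit_mem _ hxq hux)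
    -- each interval of the chain admits a monotone injection from Ideal S''
    have interval_transfer : ∀ n (γ' : Ordinal),
        DevLE γ' (Set.Icc (f (n+1)) (f n)) inferInstance →
        DevLE γ' (Ideal S'') inferInstance := by
      intro n γ' hdev'
      set g : Ideal S'' → Set.Icc (f (n+1)) (f n) := fun K =>
        ⟨Submodule.map (LinearMap.lsmul S' S' (x ^ n)) (Ideal.comap mk2 K), by
          constructor
          · rw [hf]
            refine (Ideal.span_le).2 (Set.singleton_subset_iff.2 ?_)
            refine Submodule.mem_map.2 ⟨x, ?_, ?_⟩
            · show mk2 x ∈ K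
              have : mk2 x = 0 := Ideal.Quotient.eq_zero_iff_mem.2
                (Ideal.mem_span_singleton_self x)
              rw [this]
              exact K.zero_mem
            · show x ^ n • x = x ^ (n+1)
              rw [smul_eq_mul, pow_succ]
          · intro z hz
            obtain ⟨w, _, hw⟩ := Submodule.mem_map.1 hz
            rw [hf]
            refine Ideal.mem_span_singleton'.2 ⟨w, ?_⟩
            rw [← hw]
            show w * x ^ n = x ^ n • w
            rw [smul_eq_mul, mul_comm]⟩ with hg
      have hgmono : Monotone g := by
        intro K1 K2 hK
        exact Subtype.mk_le_mk.2 (Submodule.map_mono (Ideal.comap_mono hK))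
      have hginj : Function.Injective g := by
        intro K1 K2 hK
        have hval := congrArg Subtype.val hK
        simp only [hg] at hval
        have hcomap : Ideal.comap mk2 K1 = Ideal.comap mk2 K2 := by
          refine le_antisymm ?_ ?_ <;>
          · intro a ha
            have hmem : x ^ n • a ∈
                Submodule.map (LinearMap.lsmul S' S' (x ^ n)) (Ideal.comap mk2 K1) ∨ True :=
              Or.inr trivial
            first
            | (have h1 : (LinearMap.lsmul S' S' (x ^ n)) a ∈
                  Submodule.map (LinearMap.lsmul S' S' (x ^ n)) (Ideal.comap mk2 K2) := by
                  rw [← hval]; exact Submodule.mem_map_of_mem ha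
               obtain ⟨b, hb, hba⟩ := Submodule.mem_map.1 h1
               have : b = a := by
                 have := hba
                 simp only [LinearMap.lsmul_apply, smul_eq_mul] at this
                 exact mul_left_cancel₀ (hxnne n) this
               rwa [← this])
            | (have h1 : (LinearMap.lsmul S' S' (x ^ n)) a ∈
                  Submodule.map (LinearMap.lsmul S' S' (x ^ n)) (Ideal.comap mk2 K1) := by
                  rw [hval]; exact Submodule.mem_map_of_mem ha
               obtain ⟨b, hb, hba⟩ := Submodule.mem_map.1 h1
               have : b = a := by
                 have := hba
                 simp only [LinearMap.lsmul_apply, smul_eq_mul] at this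
                 exact mul_left_cancel₀ (hxnne n) this
               rwa [← this])
        exact Ideal.comap_injective_of_surjective mk2 hmk2surj hcomap
      exact DevLE.of_monoInj γ' g hgmono hginj hdev'
    have hnotk : ¬ DevLE (k : Ordinal) (Ideal S') inferInstance := by
      refine not_devLE_of_chain f hfdesc ?_
      intro n
      constructor
      · intro hsub
        exact hfne n (congrArg Subtype.val
          (hsub.elim ⟨f (n+1), le_refl _, hfdesc n⟩ ⟨f n, hfdesc n, le_refl _⟩))
      · intro γ' hγ' hdev'
        exact IH' γ' hγ' (interval_transfer n γ' hdev')
    -- transfer from S to S' and conclude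
    have hγk : γ ≤ (k : Ordinal) := by
      have : ((k+1 : ℕ) : Ordinal) = Order.succ (k : Ordinal) := by
        rw [Nat.cast_succ, Ordinal.add_one_eq_succ]
      rw [this] at hγ
      exact Order.lt_succ_iff.1 hγ
    have hS'dev : DevLE γ (Ideal S') inferInstance := by
      refine DevLE.of_monoInj γ (Ideal.comap mk1) (fun I J h => Ideal.comap_mono h)
        (Ideal.comap_injective_of_surjective mk1 hmk1surj) hdev
    exact hnotk (hS'dev.mono hγk)

/-- Bound on lengths of descending chains of primes containing `I`. -/
def primeChainBound (T : Type) [CommRing T] (I : Ideal T) (d : ℕ) : Prop :=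
  ∀ (j : ℕ) (p : ℕ → Ideal T), (∀ i ≤ j, (p i).IsPrime) → (∀ i < j, p (i+1) < p i) →
    I ≤ p j → j ≤ d

theorem primeChainBound.mono_ideal {T : Type} [CommRing T] {I J : Ideal T} (h : I ≤ J)
    {d : ℕ} (hb : primeChainBound T I d) : primeChainBound T J d :=
  fun j p h1 h2 h3 => hb j p h1 h2 (le_trans h h3)

/-- The interval `[A, B]` in the submodule lattice embeds in the lattice of the
subquotient `B / A`. -/
theorem DevLE.icc_of_quot {T M : Type} [CommRing T] [AddCommGroup M] [Module T M]
    {β : Ordinal.{0}} (A B : Submodule T M) (hAB : A ≤ B)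
    (h : DevLE β (Submodule T (↥B ⧸ Submodule.comap B.subtype A)) inferInstance) :
    DevLE β (Set.Icc A B) inferInstance := by
  refine DevLE.of_monoInj β (fun J : Set.Icc A B =>
    Submodule.map (Submodule.comap B.subtype A).mkQ (Submodule.comap B.subtype J.1)) ?_ ?_ h
  · intro a b hab
    exact Submodule.map_mono (Submodule.comap_mono hab)
  · intro a b hab
    have hab' : Submodule.map (Submodule.comap B.subtype A).mkQ (Submodule.comap B.subtype a.1) =
        Submodule.map (Submodule.comap B.subtype A).mkQ (Submodule.comap B.subtype b.1) := hab
    have h2 := congrArg (Submodule.comap (Submodule.comap B.subtype A).mkQ) hab'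
    rw [Submodule.comap_map_mkQ, Submodule.comap_map_mkQ,
      sup_eq_right.2 (Submodule.comap_mono a.2.1), sup_eq_right.2 (Submodule.comap_mono b.2.1)]
      at h2
    have h3 := congrArg (Submodule.map B.subtype) h2
    rw [Submodule.map_comap_subtype, Submodule.map_comap_subtype,
      inf_eq_right.2 a.2.2, inf_eq_right.2 b.2.2] at h3
    exact Subtype.ext h3

/-- Exact sequence lemma: deviation of `M` is bounded by those of `C` and `M ⧸ C`. -/
theorem devLE_of_sub_quot {T M : Type} [CommRing T] [AddCommGroup M] [Module T M]
    {β : Ordinal.{0}} (C : Submodule T M)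
    (h1 : DevLE β (Submodule T ↥C) inferInstance)
    (h2 : DevLE β (Submodule T (M ⧸ C)) inferInstance) :
    DevLE β (Submodule T M) inferInstance := by
  have hIccBot : DevLE β (Set.Icc (⊥ : Submodule T M) C) inferInstance := by
    refine DevLE.of_monoInj β
      (fun J : Set.Icc (⊥ : Submodule T M) C => Submodule.comap C.subtype J.1) ?_ ?_ h1
    · intro a b hab
      exact Submodule.comap_mono hab
    · intro a b hab
      have hab' : Submodule.comap C.subtype a.1 = Submodule.comap C.subtype b.1 := hab
      have h3 := congrArg (Submodule.map C.subtype) hab'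
      rw [Submodule.map_comap_subtype, Submodule.map_comap_subtype,
        inf_eq_right.2 a.2.2, inf_eq_right.2 b.2.2] at h3
      exact Subtype.ext h3
  have hIccTop : DevLE β (Set.Icc C (⊤ : Submodule T M)) inferInstance := by
    refine DevLE.of_monoInj β
      (fun J : Set.Icc C (⊤ : Submodule T M) => Submodule.map C.mkQ J.1) ?_ ?_ h2
    · intro a b hab
      exact Submodule.map_mono hab
    · intro a b hab
      have hab' : Submodule.map C.mkQ a.1 = Submodule.map C.mkQ b.1 := hab
      have h3 := congrArg (Submodule.comap C.mkQ) hab'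
      rw [Submodule.comap_map_mkQ, Submodule.comap_map_mkQ,
        sup_eq_right.2 a.2.1, sup_eq_right.2 b.2.1] at h3
      exact Subtype.ext h3
  have hsplit := DevLE.split β (Submodule T M) ⊥ C ⊤ bot_le le_top hIccBot hIccTop
  refine DevLE.of_monoInj β
    (fun J : Submodule T M => (⟨J, bot_le, le_top⟩ : Set.Icc (⊥ : Submodule T M) ⊤)) ?_ ?_ hsplit
  · intro a b hab
    exact Subtype.mk_le_mk.2 hab
  · intro a b hab
    have h' := congrArg (fun z : Set.Icc (⊥ : Submodule T M) ⊤ => z.1) hab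
    exact h'

open Filter in
/-- Deviation bound for cyclic prime quotients. -/
theorem devLE_quotient_prime (T : Type) [CommRing T] [IsNoetherianRing T] (d : ℕ)
    (IH : ∀ d' : ℕ, d' < d → ∀ (M : Type) [AddCommGroup M] [Module T M] [IsNoetherian T M],
      primeChainBound T (Module.annihilator T M) d' →
      DevLE (d' : Ordinal) (Submodule T M) inferInstance)
    (p : Ideal T) (hp : p.IsPrime) (hb : primeChainBound T p d) :
    DevLE (d : Ordinal) (Submodule T (T ⧸ (p : Submodule T T))) inferInstance := by
  haveI : IsNoetherian T T := inferInstanceAs (IsNoetherianRing T)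
  cases d with
  | zero =>
    -- p is maximal, so the module is simple and every chain stabilizes
    have hmax : p.IsMaximal := by
      obtain ⟨m, hm, hpm⟩ := Ideal.exists_le_maximal p hp.ne_top
      have hmp : m = p := by
        by_contra hne
        have hlt : p < m := lt_of_le_of_ne hpm (Ne.symm hne)
        have h1 := hb 1 (fun i => if i = 0 then m else p) ?_ ?_ ?_
        · omega
        · intro i hi
          by_cases h : i = 0
          · simpa [h] using hm.isPrime
          · simpa [h] using hp
        · intro i hi
          have : i = 0 := by omega
          simpa [this] using hlt
        · simp
      rw [← hmp]
      exact hm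
    rw [DevLE_iff]
    intro f hf
    have hclass : ∀ n, f n = ⊥ ∨ f n = ⊤ := by
      intro n
      set J : Submodule T T := Submodule.comap (Submodule.mkQ (p : Submodule T T)) (f n) with hJdef
      have hJ : Submodule.map (Submodule.mkQ (p : Submodule T T)) J = f n := by
        rw [hJdef, Submodule.map_comap_eq, Submodule.range_mkQ, top_inf_eq]
      have hpJ : (p : Submodule T T) ≤ J := by
        intro t ht
        show Submodule.mkQ (p : Submodule T T) t ∈ f n
        have : Submodule.mkQ (p : Submodule T T) t = 0 := (Submodule.Quotient.mk_eq_zero _).2 ht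
        rw [this]
        exact (f n).zero_mem
      by_cases hJt : J = ⊤
      · right
        rw [← hJ, hJt, Submodule.map_top, Submodule.range_mkQ]
      · left
        have hJp : J = p := (hmax.eq_of_le hJt hpJ).symm
        rw [← hJ, hJp]
        refine le_bot_iff.1 (Submodule.map_le_iff_le_comap.2 ?_)
        rw [Submodule.comap_bot, Submodule.ker_mkQ]
    have hanti := antitone_nat_of_succ_le hf
    by_cases hbot : ∃ n0, f n0 = ⊥
    · obtain ⟨n0, hn0⟩ := hbot
      refine Filter.eventually_atTop.2 ⟨n0, fun n hn => Or.inl ?_⟩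
      have h1 : f n = ⊥ := le_bot_iff.1 (hn0 ▸ hanti hn)
      have h2 : f (n+1) = ⊥ := le_bot_iff.1 (hn0 ▸ hanti (by omega : n0 ≤ n + 1))
      rw [h1, h2]
      exact subsingleton_Icc_self _
    · push_neg at hbot
      refine Filter.Eventually.of_forall (fun n => Or.inl ?_)
      have h1 : f n = ⊤ := (hclass n).resolve_left (hbot n)
      have h2 : f (n+1) = ⊤ := (hclass (n+1)).resolve_left (hbot (n+1))
      rw [h1, h2]
      exact subsingleton_Icc_self _
  | succ d' =>
    rw [DevLE_iff]
    intro f hf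
    have hanti := antitone_nat_of_succ_le hf
    by_cases hbot : ∃ n0, f n0 = ⊥
    · obtain ⟨n0, hn0⟩ := hbot
      refine Filter.eventually_atTop.2 ⟨n0, fun n hn => Or.inl ?_⟩
      have h1 : f n = ⊥ := le_bot_iff.1 (hn0 ▸ hanti hn)
      have h2 : f (n+1) = ⊥ := le_bot_iff.1 (hn0 ▸ hanti (by omega : n0 ≤ n + 1))
      rw [h1, h2]
      exact subsingleton_Icc_self _
    · push_neg at hbot
      refine Filter.Eventually.of_forall (fun n => Or.inr ?_)
      refine ⟨(d' : Ordinal), ?_, ?_⟩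
      · rw [Nat.cast_succ]
        exact lt_add_one _
      -- the interval `[f (n+1), f n]`
      set mkp := Submodule.mkQ (p : Submodule T T) with hmkp
      set J : Submodule T T := Submodule.comap mkp (f (n+1)) with hJdef
      have hpJle : (p : Submodule T T) ≤ J := by
        intro t ht
        show mkp t ∈ f (n+1)
        have : mkp t = 0 := (Submodule.Quotient.mk_eq_zero _).2 ht
        rw [this]
        exact (f (n+1)).zero_mem
      have hpJ : (p : Submodule T T) < J := by
        refine lt_of_le_of_ne hpJle ?_
        intro he
        obtain ⟨y, hy, hy0⟩ := Submodule.exists_mem_ne_zero_of_ne_bot (hbot (n+1))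
        obtain ⟨t, rfl⟩ := Submodule.mkQ_surjective _ y
        have htJ : t ∈ J := hy
        rw [← he] at htJ
        exact hy0 ((Submodule.Quotient.mk_eq_zero _).2 htJ)
      set Q := (↥(f n) ⧸ Submodule.comap (f n).subtype (f (n+1))) with hQdef
      have hann : J ≤ Module.annihilator T Q := by
        intro b hbJ
        rw [Module.mem_annihilator]
        intro mq
        obtain ⟨z, rfl⟩ := Submodule.mkQ_surjective _ mq
        rw [← map_smul]
        rw [Submodule.mkQ_apply, Submodule.Quotient.mk_eq_zero]
        show (b • z).1 ∈ f (n+1)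
        have hz1 : (b • z).1 = b • z.1 := rfl
        rw [hz1]
        obtain ⟨c, hc⟩ := Submodule.mkQ_surjective (p : Submodule T T) z.1
        have hbz : b • z.1 = c • (mkp b) := by
          rw [← hc, ← map_smul, ← map_smul, smul_eq_mul, smul_eq_mul, mul_comm]
        rw [hbz]
        exact Submodule.smul_mem _ c hbJ
      have hpcb : primeChainBound T (Module.annihilator T Q) d' := by
        intro j r hrp hrl hrc
        have hj1 := hb (j+1) (fun i => if i ≤ j then r i else p) ?_ ?_ ?_
        · omega
        · intro i hi
          by_cases h : i ≤ j
          · simpa [h] using hrp i h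
          · simpa [h] using hp
        · intro i hi
          by_cases h : i + 1 ≤ j
          · have h2 : i ≤ j := by omega
            simpa [h, h2] using hrl i (by omega)
          · have h2 : i = j := by omega
            subst h2
            have h3 : ¬ (i + 1 ≤ i) := by omega
            simp only [h3, if_false, le_refl, if_true]
            exact lt_of_lt_of_le hpJ (le_trans hann hrc)
        · have h3 : ¬ (j + 1 ≤ j) := by omega
          simp only [h3, if_false]
          exact le_rfl
      haveI : IsNoetherian T (T ⧸ (p : Submodule T T)) := isNoetherian_quotient _
      haveI : IsNoetherian T ↥(f n) := inferInstance
      haveI : IsNoetherian T Q := isNoetherian_quotient _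
      have hdev := IH d' (by omega) Q hpcb
      exact DevLE.icc_of_quot (f (n+1)) (f n) (hf n) hdev

/-- Main theorem (one direction): a Noetherian module over a ring whose primes above
the annihilator form chains of length at most `d` has deviation at most `d`. -/
theorem devLE_of_primeChainBound : ∀ (d : ℕ) (T : Type) [CommRing T] [IsNoetherianRing T]
    (M : Type) [AddCommGroup M] [Module T M] [IsNoetherian T M],
    primeChainBound T (Module.annihilator T M) d →
    DevLE (d : Ordinal) (Submodule T M) inferInstance := by
  intro d
  induction d using Nat.strong_induction_on with
  | _ d IH =>
    intro T _ _ M _ _ _ hpcb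
    by_contra hc
    set Ω : Set (Submodule T M) :=
      {N : Submodule T M | ¬ DevLE (d : Ordinal) (Submodule T (M ⧸ N)) inferInstance} with hΩ
    have hΩne : Ω.Nonempty := by
      refine ⟨⊥, ?_⟩
      intro h0
      apply hc
      exact DevLE.of_monoInj _
        (Submodule.map (Submodule.quotEquivOfEqBot (⊥ : Submodule T M) rfl).symm.toLinearMap)
        (fun a b hab => Submodule.map_mono hab)
        (Submodule.map_injective_of_injective (LinearEquiv.injective _)) h0
    obtain ⟨N, hNΩ, hNmax⟩ := (set_has_maximal_iff_noetherian.mpr inferInstance) Ω hΩne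
    have hquot : ∀ N' : Submodule T M, N < N' →
        DevLE (d : Ordinal) (Submodule T (M ⧸ N')) inferInstance := by
      intro N' hlt
      by_contra hq
      exact hNmax N' hq hlt
    haveI : Nontrivial (M ⧸ N) := by
      rcases subsingleton_or_nontrivial (M ⧸ N) with hs | hn
      · exact absurd (DevLE.of_subsingleton ((Submodule.subsingleton_iff T).mpr hs)) hNΩ
      · exact hn
    obtain ⟨p, hpass⟩ := associatedPrimes.nonempty T (M ⧸ N)
    obtain ⟨hpprime, z, hz⟩ := isAssociatedPrime_iff.1 hpass
    replace hz : p = (Submodule.span T {z}).annihilator := by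
      rw [hz]; ext a; simp [Submodule.mem_colon_singleton]
    set g0 : T →ₗ[T] (M ⧸ N) := LinearMap.toSpanSingleton T (M ⧸ N) z with hg0
    have hker : LinearMap.ker g0 = (p : Submodule T T) := by
      ext a
      rw [LinearMap.mem_ker]
      show g0 a = 0 ↔ a ∈ p
      rw [hz, hg0]
      rw [LinearMap.toSpanSingleton_apply]
      exact (Submodule.mem_annihilator_span_singleton z a).symm
    set C : Submodule T (M ⧸ N) := LinearMap.range g0 with hC
    have hz0 : z ≠ 0 := by
      intro h0
      apply hpprime.ne_top
      rw [hz, h0]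
      rw [eq_top_iff]
      intro a _
      exact (Submodule.mem_annihilator_span_singleton 0 a).2 (smul_zero a)
    have hC0 : C ≠ ⊥ := by
      intro h0
      apply hz0
      have h1 : g0 1 ∈ C := LinearMap.mem_range_self g0 1
      rw [h0, Submodule.mem_bot] at h1
      rw [hg0, LinearMap.toSpanSingleton_apply, one_smul] at h1
      exact h1
    have hannle : Module.annihilator T M ≤ p := by
      have h1 : Module.annihilator T M ≤ Module.annihilator T (M ⧸ N) := by
        intro a ha
        rw [Module.mem_annihilator] at ha ⊢
        intro mq
        obtain ⟨m, rfl⟩ := Submodule.mkQ_surjective N mq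
        rw [← map_smul, ha m, map_zero]
      refine le_trans h1 ?_
      intro a ha
      rw [hz]
      exact (Submodule.mem_annihilator_span_singleton z a).2 (Module.mem_annihilator.1 ha z)
    have hpb : primeChainBound T p d := hpcb.mono_ideal hannle
    have hCq : DevLE (d : Ordinal) (Submodule T (T ⧸ (p : Submodule T T))) inferInstance :=
      devLE_quotient_prime T d (fun d' hd' M' _ _ _ hb' => IH d' hd' T M' hb') p hpprime hpb
    have hCdev : DevLE (d : Ordinal) (Submodule T ↥C) inferInstance := by
      rw [← hker] at hCq
      exact DevLE.of_monoInj _ (Submodule.map g0.quotKerEquivRange.symm.toLinearMap)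
        (fun a b hab => Submodule.map_mono hab)
        (Submodule.map_injective_of_injective (LinearEquiv.injective _)) hCq
    set N' : Submodule T M := Submodule.comap N.mkQ C with hN'
    have hNle : N ≤ N' := by
      intro t ht
      show N.mkQ t ∈ C
      have h1 : N.mkQ t = 0 := (Submodule.Quotient.mk_eq_zero _).2 ht
      rw [h1]
      exact C.zero_mem
    have hCmap : Submodule.map N.mkQ N' = C := by
      rw [hN', Submodule.map_comap_eq, Submodule.range_mkQ, top_inf_eq]
    have hNN' : N < N' := by
      refine lt_of_le_of_ne hNle ?_
      intro he
      apply hC0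
      rw [← hCmap, ← he]
      refine le_antisymm (Submodule.map_le_iff_le_comap.2 ?_) bot_le
      rw [Submodule.comap_bot, Submodule.ker_mkQ]
    have hMN' := hquot N' hNN'
    have hquotC : DevLE (d : Ordinal) (Submodule T ((M ⧸ N) ⧸ C)) inferInstance := by
      have e2 := Submodule.quotientQuotientEquivQuotient N N' hNle
      rw [hCmap] at e2
      exact DevLE.of_monoInj _ (Submodule.map e2.toLinearMap)
        (fun a b hab => Submodule.map_mono hab)
        (Submodule.map_injective_of_injective e2.injective) hMN'
    exact hNΩ (devLE_of_sub_quot C hCdev hquotC)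

theorem primeChainBound_of_series_bound (T : Type) [CommRing T] (d : ℕ)
    (h : ∀ l : LTSeries (PrimeSpectrum T), l.length ≤ d) (I : Ideal T) :
    primeChainBound T I d := by
  intro j p hp hlt _
  have pdesc : ∀ a, a ≤ j → ∀ b, b < a → p a < p b := by
    intro a
    induction a with
    | zero => intro _ b hb; omega
    | succ a iha =>
      intro ha b hb
      rcases Nat.lt_or_ge b a with hba | hba
      · exact lt_trans (hlt a (by omega)) (iha (by omega) b hba)
      · have : b = a := by omega
        rw [this]
        exact hlt a (by omega)
  have hsm : StrictMono (fun i : Fin (j+1) => (⟨p (j - i.1), hp _ (by omega)⟩ : PrimeSpectrum T)) := by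
    intro i i' hii'
    refine (PrimeSpectrum.asIdeal_lt_asIdeal _ _).1 ?_
    show p (j - i.1) < p (j - i'.1)
    have h1 : i.1 < i'.1 := hii'
    have h2 : i'.1 ≤ j := by omega
    exact pdesc (j - i.1) (by omega) (j - i'.1) (by omega)
  exact h (LTSeries.mk j _ hsm)

theorem exists_chain_of_series (T : Type) [CommRing T] (l : LTSeries (PrimeSpectrum T))
    (n : ℕ) (hn : n ≤ l.length) :
    ∃ p : ℕ → Ideal T, (∀ i ≤ n, (p i).IsPrime) ∧ (∀ i < n, p (i+1) < p i) := by
  refine ⟨fun i => (l.toFun ⟨l.length - min i n, by omega⟩).asIdeal, fun i _ => (l.toFun _).isPrime,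
    ?_⟩
  intro i hi
  refine (PrimeSpectrum.asIdeal_lt_asIdeal _ _).2 ?_
  refine l.strictMono ?_
  show l.length - min (i+1) n < l.length - min i n
  have h1 : min (i+1) n = i+1 := by omega
  have h2 : min i n = i := by omega
  rw [h1, h2]
  omega

theorem not_sub_ideal (R : Type) [CommRing R] [Nontrivial R] : ¬ Subsingleton (Ideal R) := by
  intro hsub
  have h1 : (⊥ : Ideal R) = ⊤ := hsub.elim ⊥ ⊤
  have h2 : (1 : R) ∈ (⊥ : Ideal R) := by rw [h1]; trivial
  rw [Ideal.mem_bot] at h2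
  exact one_ne_zero h2


/-- For a commutative Noetherian domain, the Krull dimension (supremum of lengths
of chains of prime ideals, `ringKrullDim`) agrees with the Krull dimension of `R`
as a module over itself (the deviation of the poset of ideals of `R`). -/
theorem ringKrullDim_eq_deviation_ideals (R : Type) [CommRing R] [IsDomain R]
    [IsNoetherianRing R] :
    ∀ n : ℕ, ringKrullDim R = (n : WithBot (WithTop ℕ)) ↔
      deviation (Ideal R) = ((n : Ordinal) : WithBot Ordinal) := by
  intro n
  haveI : IsNoetherian R R := inferInstanceAs (IsNoetherianRing R)
  constructor
  · intro h
    have hub : ∀ l : LTSeries (PrimeSpectrum R), l.length ≤ n := by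
      intro l
      have h1 := Order.LTSeries.length_le_krullDim l
      rw [show Order.krullDim (PrimeSpectrum R) = ringKrullDim R from rfl, h] at h1
      exact Nat.cast_le.1 h1
    have hDev : DevLE (n : Ordinal) (Ideal R) inferInstance :=
      devLE_of_primeChainBound n R R
        (primeChainBound_of_series_bound R n hub (Module.annihilator R R))
    have hex : ∃ l : LTSeries (PrimeSpectrum R), n ≤ l.length := by
      by_contra hno
      push_neg at hno
      rcases Nat.eq_zero_or_pos n with h0 | hpos
      · obtain ⟨pt⟩ := (inferInstance : Nonempty (PrimeSpectrum R))
        have := hno (RelSeries.singleton _ pt)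
        omega
      · have hle : ringKrullDim R ≤ ((n-1 : ℕ) : WithBot (WithTop ℕ)) := by
          show Order.krullDim (PrimeSpectrum R) ≤ _
          unfold Order.krullDim
          refine iSup_le ?_
          intro l
          have h2 : l.length ≤ n - 1 := by have := hno l; omega
          exact Nat.cast_le.2 h2
        rw [h] at hle
        have : n ≤ n - 1 := Nat.cast_le.1 hle
        omega
    obtain ⟨l, hl⟩ := hex
    obtain ⟨p, hp, hplt⟩ := exists_chain_of_series R l n hl
    have hlow : ∀ γ : Ordinal, γ < (n : Ordinal) → ¬ DevLE γ (Ideal R) inferInstance :=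
      chain_primes_not_devLE n R p hp hplt
    have hcond : ¬ (Subsingleton (Ideal R) ∨ ¬ HasDev (Ideal R)) := by
      push_neg
      exact ⟨not_subsingleton_iff_nontrivial.1 (not_sub_ideal R), ⟨_, hDev⟩⟩
    unfold deviation
    rw [if_neg hcond]
    refine congrArg _ ?_
    refine le_antisymm (csInf_le' hDev) (le_csInf ⟨_, hDev⟩ ?_)
    intro b hb
    by_contra hbn
    push_neg at hbn
    exact hlow b hbn hb
  · intro h
    unfold deviation at h
    by_cases hc : (Subsingleton (Ideal R) ∨ ¬ HasDev (Ideal R))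
    · rw [if_pos hc] at h
      exact absurd h (by simp)
    · rw [if_neg hc] at h
      have hsinf := WithBot.coe_inj.1 h
      push_neg at hc
      obtain ⟨hnsub, hhd'⟩ := hc
      have hhd2 : ∃ β : Ordinal, DevLE β (Ideal R) inferInstance := hhd'
      obtain ⟨β0, hβ0⟩ := hhd2
      have hne : Set.Nonempty {β : Ordinal | DevLE β (Ideal R) inferInstance} := ⟨β0, hβ0⟩
      have hmem := csInf_mem hne
      rw [hsinf] at hmem
      have hlow : ∀ γ : Ordinal, γ < (n : Ordinal) → ¬ DevLE γ (Ideal R) inferInstance := by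
        intro γ hγ hdev
        have h2 : sInf {β : Ordinal | DevLE β (Ideal R) inferInstance} ≤ γ := csInf_le' hdev
        rw [hsinf] at h2
        exact absurd (lt_of_le_of_lt h2 hγ) (lt_irrefl _)
      have hub : ∀ l : LTSeries (PrimeSpectrum R), l.length ≤ n := by
        intro l
        by_contra hlen
        push_neg at hlen
        obtain ⟨p, hp, hplt⟩ := exists_chain_of_series R l (n+1) (by omega)
        exact chain_primes_not_devLE (n+1) R p hp hplt (n : Ordinal)
          (by exact_mod_cast Nat.lt_succ_self n) hmem
      have hle : ringKrullDim R ≤ (n : WithBot (WithTop ℕ)) := by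
        show Order.krullDim (PrimeSpectrum R) ≤ _
        unfold Order.krullDim
        exact iSup_le (fun l => Nat.cast_le.2 (hub l))
      refine le_antisymm hle ?_
      by_contra hlt
      replace hlt : ringKrullDim R < (n : WithBot (WithTop ℕ)) := lt_of_not_ge hlt
      rcases Nat.eq_zero_or_pos n with h0 | hpos
      · subst h0
        have h3 := Order.krullDim_nonneg (α := PrimeSpectrum R)
        rw [show Order.krullDim (PrimeSpectrum R) = ringKrullDim R from rfl] at h3
        have h4 := lt_of_le_of_lt h3 hlt
        simp at h4
        exact lt_irrefl _ h4
      · have hub' : ∀ l : LTSeries (PrimeSpectrum R), l.length ≤ n - 1 := by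
          intro l
          have h1 := Order.LTSeries.length_le_krullDim l
          rw [show Order.krullDim (PrimeSpectrum R) = ringKrullDim R from rfl] at h1
          have h2 : (l.length : WithBot (WithTop ℕ)) < (n : WithBot (WithTop ℕ)) :=
            lt_of_le_of_lt h1 hlt
          have h3 : l.length < n := by exact_mod_cast h2
          omega
        have hDev' : DevLE ((n-1 : ℕ) : Ordinal) (Ideal R) inferInstance :=
          devLE_of_primeChainBound (n-1) R R
            (primeChainBound_of_series_bound R (n-1) hub' (Module.annihilator R R))
        refine hlow ((n-1 : ℕ) : Ordinal) ?_ hDev'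
        have h5 : n - 1 < n := by omega
        exact_mod_cast h5
end

section
/- If S is a subring of a commutative domain R such that R is integral over S, then the Krull dimension of R equals the Krull dimension of S. -/
/-!
Incomparability makes `Spec S → Spec R` strictly monotone for an integral extension `R → S`,
so chains of primes of `S` map to chains of the same length in `R`. Conversely, lying over
provides a prime of `S` above the bottom of any chain of primes of `R`, and going up lifts the
whole chain from there.
-/

open PrimeSpectrum

variable {R S : Type*} [CommRing R] [CommRing S] [Algebra R S]

lemma PrimeSpectrum.comap_strictMono_of_isIntegral [Algebra.IsIntegral R S] :
    StrictMono (comap (algebraMap R S)) := by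
  intro P Q hPQ
  obtain ⟨hle, x, hxQ, hxP⟩ := SetLike.lt_iff_le_and_exists.mp (asIdeal_lt_asIdeal P Q |>.mpr hPQ)
  exact Ideal.comap_lt_comap_of_integral_mem_sdiff hle ⟨hxQ, hxP⟩ (Algebra.IsIntegral.isIntegral x)

lemma ringKrullDim_le_of_isIntegral [Algebra.IsIntegral R S] :
    ringKrullDim S ≤ ringKrullDim R :=
  Order.krullDim_le_of_strictMono _ comap_strictMono_of_isIntegral

lemma ringKrullDim_le_of_hasGoingUp [Algebra.HasGoingUp R S]
    (hsurj : Function.Surjective (comap (algebraMap R S))) :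
    ringKrullDim R ≤ ringKrullDim S := by
  refine iSup_le fun l => ?_
  obtain ⟨P, hP⟩ := hsurj l.head
  have : P.asIdeal.LiesOver l.head.asIdeal := ⟨congrArg asIdeal hP.symm⟩
  obtain ⟨L, hL, -⟩ := Ideal.exists_ltSeries_of_hasGoingUp l P.asIdeal
  exact hL ▸ Order.LTSeries.length_le_krullDim L

lemma ringKrullDim_eq_of_isIntegral_of_faithfulSMul [Algebra.IsIntegral R S] [FaithfulSMul R S] :
    ringKrullDim S = ringKrullDim R :=
  ringKrullDim_le_of_isIntegral.antisymm
    (ringKrullDim_le_of_hasGoingUp (Algebra.IsIntegral.comap_surjective R S))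

theorem ringKrullDim_eq_of_isIntegral_general (R : Type) [CommRing R]
    (S : Subring R) (h : ∀ r : R, IsIntegral S r) :
    ringKrullDim R = ringKrullDim S :=
  have : Algebra.IsIntegral S R := ⟨h⟩
  ringKrullDim_eq_of_isIntegral_of_faithfulSMul

/-- If `S` is a subring of a commutative domain `R` such that `R` is integral
over `S`, then the Krull dimensions of `R` and `S` coincide. -/
theorem ringKrullDim_eq_of_isIntegral (R : Type) [CommRing R] [IsDomain R]
    (S : Subring R) (h : ∀ r : R, IsIntegral S r) :
    ringKrullDim R = ringKrullDim S :=
  ringKrullDim_eq_of_isIntegral_general R S h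
end

section
/- Let B be a finitely generated abelian group and M a simple module over the integral group ring ℤB. Then M is finite. -/
/-- `ℤ` is a Jacobson ring. -/
lemma int_isJacobsonRing : IsJacobsonRing ℤ := by
  rw [isJacobsonRing_iff_prime_eq]
  intro P hP
  rcases eq_or_ne P ⊥ with rfl | h
  · refine le_antisymm (fun x hx => ?_) (Ideal.le_jacobson)
    rw [Ideal.mem_jacobson_bot] at hx
    have h1 := hx 1
    have h2 := hx (-1)
    rw [Int.isUnit_iff] at h1 h2
    rw [Ideal.mem_bot]
    omega
  · haveI : P.IsMaximal := IsPrime.to_maximal_ideal (hpi := hP) h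
    exact Ideal.jacobson_eq_self_of_isMaximal

/-- A field that is finitely generated as a `ℤ`-algebra is finite. -/
lemma finite_of_field_finiteType_int (K : Type) [Field K] [Algebra.FiniteType ℤ K] :
    Finite K := by
  haveI : IsJacobsonRing ℤ := int_isJacobsonRing
  haveI : Module.Finite ℤ K := finite_of_finite_type_of_isJacobsonRing ℤ K
  haveI : Algebra.IsIntegral ℤ K := Algebra.IsIntegral.of_finite ℤ K
  haveI : (⊥ : Ideal K).IsMaximal := Ideal.bot_isMaximal
  have hmax : (Ideal.comap (algebraMap ℤ K) (⊥ : Ideal K)).IsMaximal :=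
    Ideal.isMaximal_comap_of_isIntegral_of_isMaximal (⊥ : Ideal K)
  set p := ringChar K with hp
  have hp0 : p ≠ 0 := by
    intro h
    haveI : CharP K 0 := h ▸ ringChar.charP K
    haveI : CharZero K := CharP.charP_to_charZero K
    have hker : Ideal.comap (algebraMap ℤ K) (⊥ : Ideal K) = ⊥ := by
      rw [← RingHom.ker_eq_comap_bot, ← RingHom.injective_iff_ker_eq_bot]
      intro a b hab
      have : ((a : ℤ) : K) = ((b : ℤ) : K) := by
        simpa [algebraMap_int_eq] using hab
      exact_mod_cast this
    rw [hker] at hmax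
    have h2 : (⊥ : Ideal ℤ) < Ideal.span {(2 : ℤ)} := by
      rw [bot_lt_iff_ne_bot, Ne, Ideal.span_singleton_eq_bot]
      norm_num
    have := hmax.out.2 _ h2
    rw [Ideal.span_singleton_eq_top, Int.isUnit_iff] at this
    norm_num at this
  haveI : CharP K p := ringChar.charP K
  haveI : NeZero p := ⟨hp0⟩
  letI : Algebra (ZMod p) K := ZMod.algebra _ _
  haveI : Module.Finite (ZMod p) K := Module.Finite.of_restrictScalars_finite ℤ (ZMod p) K
  exact Module.finite_of_finite (ZMod p)

/-- The quotient of a commutative ring of finite type over `ℤ` by a maximal ideal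
is finite. -/
lemma finite_quotient_of_maximal (R : Type) [CommRing R] [Algebra.FiniteType ℤ R]
    (I : Ideal R) (hI : I.IsMaximal) : Finite (R ⧸ I) := by
  haveI := hI
  letI : Field (R ⧸ I) := Ideal.Quotient.field I
  haveI : Algebra.FiniteType ℤ (R ⧸ I) :=
    Algebra.FiniteType.of_surjective
      (Ideal.Quotient.mk I).toIntAlgHom Ideal.Quotient.mk_surjective
  exact @finite_of_field_finiteType_int (R ⧸ I) _ this

/-- A simple module over the integral group ring `ℤB` of a finitely generated
abelian group `B` is finite. -/
theorem finite_of_isSimpleModule_int_groupRing (B : Type) [CommGroup B] [Group.FG B]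
    (M : Type) [AddCommGroup M] [Module (MonoidAlgebra ℤ B) M]
    [IsSimpleModule (MonoidAlgebra ℤ B) M] : Finite M := by
  set R := MonoidAlgebra ℤ B
  obtain ⟨I, hI, ⟨e⟩⟩ := isSimpleModule_iff_quot_maximal.mp
    (inferInstance : IsSimpleModule R M)
  haveI : Monoid.FG B := Group.fg_iff_monoid_fg.mp ‹_›
  haveI : Algebra.FiniteType ℤ R := MonoidAlgebra.finiteType_of_fg
  haveI : Finite (R ⧸ I) := @finite_quotient_of_maximal R _ this I hI
  exact Finite.of_equiv (R ⧸ I) e.symm.toEquiv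
end

section
/- Let B be a finitely generated abelian group and M a simple ℤB-module. Then M is annihilated by some prime integer p, i.e., pM = 0 for some prime p. -/
/-- The integers form a Jacobson ring: every prime ideal is an intersection of
maximal ideals. -/
instance : IsJacobsonRing ℤ := by
  rw [isJacobsonRing_iff_prime_eq]
  intro P hP
  by_cases h : P = ⊥
  · subst h
    refine le_antisymm ?_ Ideal.le_jacobson
    intro x hx
    by_contra hx0
    have hx0 : x ≠ 0 := by simpa using hx0
    obtain ⟨q, hqlt, hq⟩ := Nat.exists_infinite_primes (x.natAbs + 1)
    have hqmax : (Ideal.span {(q : ℤ)}).IsMaximal :=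
      PrincipalIdealRing.isMaximal_of_irreducible
        (Int.prime_iff_natAbs_prime.mpr (by simpa using hq)).irreducible
    have hxq : x ∈ Ideal.span {(q : ℤ)} :=
      (Ideal.mem_sInf.mp hx) ⟨bot_le, hqmax⟩
    rw [Ideal.mem_span_singleton] at hxq
    have := Int.le_of_dvd (by positivity) ((dvd_abs _ _).mpr hxq)
    rw [Int.abs_eq_natAbs] at this
    omega
  · exact Ideal.jacobson_eq_self_of_isMaximal
      (H := IsPrime.to_maximal_ideal h)

/-- A simple module over the integral group ring `ℤB` of a finitely generated
abelian group `B` is annihilated by some prime integer `p`. -/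
theorem exists_prime_annihilating_simple_module (B : Type) [CommGroup B] [Group.FG B]
    (M : Type) [AddCommGroup M] [Module (MonoidAlgebra ℤ B) M]
    [IsSimpleModule (MonoidAlgebra ℤ B) M] :
    ∃ p : ℕ, p.Prime ∧ ∀ m : M, p • m = 0 := by
  set R := MonoidAlgebra ℤ B
  have hFG : Monoid.FG B := Group.fg_iff_monoid_fg.mp ‹_›
  have hI : (Module.annihilator R M).IsMaximal := IsSimpleModule.annihilator_isMaximal
  set I := Module.annihilator R M
  letI : Field (R ⧸ I) := Ideal.Quotient.field I
  haveI : Algebra.FiniteType ℤ R := MonoidAlgebra.finiteType_of_fg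
  haveI : Algebra.FiniteType ℤ (R ⧸ I) :=
    Algebra.FiniteType.of_surjective (Ideal.Quotient.mkₐ ℤ I)
      (Ideal.Quotient.mkₐ_surjective ℤ I)
  haveI : Module.Finite ℤ (R ⧸ I) := finite_of_finite_type_of_isJacobsonRing ℤ (R ⧸ I)
  haveI : Algebra.IsIntegral ℤ (R ⧸ I) := Algebra.IsIntegral.of_finite ℤ (R ⧸ I)
  obtain ⟨p, hp⟩ := CharP.exists (R ⧸ I)
  rcases CharP.char_is_prime_or_zero (R ⧸ I) p with hprime | h0
  · refine ⟨p, hprime, fun m => ?_⟩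
    have hpI : ((p : ℤ) : R) ∈ I := by
      rw [← Ideal.Quotient.eq_zero_iff_mem]
      have : (Ideal.Quotient.mk I) ((p : ℤ) : R) = ((p : ℤ) : R ⧸ I) := map_intCast _ _
      rw [this]
      exact_mod_cast CharP.cast_eq_zero (R ⧸ I) p
    have := Module.mem_annihilator.mp hpI m
    calc p • m = (((p : ℤ) : R)) • m := by
          rw [Int.cast_smul_eq_zsmul, natCast_zsmul]
        _ = 0 := this
  · exfalso
    subst h0
    haveI : CharZero (R ⧸ I) := CharP.charP_to_charZero _
    have hinj : Function.Injective (algebraMap ℤ (R ⧸ I)) :=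
      (algebraMap ℤ (R ⧸ I)).injective_int
    exact Int.not_isField
      ((Algebra.IsIntegral.isField_iff_isField hinj).mpr (Field.toIsField _))
end

section
/- Let F be an algebraically closed field of characteristic zero, H a quasicyclic p-subgroup of F^* (the p-power roots of unity), g = 1/p ∈ F, and R the subring of F generated by H and g. Then the additive group of R is isomorphic to a countably infinite direct sum of copies of the ring ℤ[1/p] of p-adic fractions; in particular, the additive group of R is not minimax. -/
section Zeta
variable (F : Type) [Field F] [IsAlgClosed F] [CharZero F] (p : ℕ)

lemma zeta_step (hp : p.Prime) (n : ℕ) {z : F} (hz : IsPrimitiveRoot z (p ^ n)) :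
    ∃ w : F, IsPrimitiveRoot w (p ^ (n + 1)) ∧ w ^ p = z := by
  have hpF : (p : F) ≠ 0 := Nat.cast_ne_zero.2 hp.ne_zero
  cases n with
  | zero =>
    have hz1 : z = 1 := by simpa using hz.pow_eq_one
    obtain ⟨w, hw⟩ : ∃ w : F, IsPrimitiveRoot w p := by
      have hdeg : (Polynomial.cyclotomic p F).degree ≠ 0 := by
        rw [Polynomial.degree_cyclotomic]
        simp only [Ne, Nat.cast_eq_zero]
        exact (Nat.totient_pos.2 hp.pos).ne'
      obtain ⟨x, hx⟩ := IsAlgClosed.exists_root _ hdeg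
      haveI : NeZero (p : F) := ⟨hpF⟩
      exact ⟨x, (Polynomial.isRoot_cyclotomic_iff).1 hx⟩
    exact ⟨w, by simpa using hw, by rw [hw.pow_eq_one, hz1]⟩
  | succ m =>
    obtain ⟨w, hw⟩ := IsAlgClosed.exists_pow_nat_eq z hp.pos
    refine ⟨w, ?_, hw⟩
    have h1 : w ^ p ^ (m + 2) = 1 := by
      rw [pow_succ', pow_mul, hw, hz.pow_eq_one]
    have hne : w ^ p ^ (m + 1) ≠ 1 := by
      have : w ^ p ^ (m + 1) = z ^ p ^ m := by rw [pow_succ', pow_mul, hw]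
      rw [this]
      exact hz.pow_ne_one_of_pos_of_lt (pow_pos hp.pos m).ne'
        (pow_lt_pow_right₀ hp.one_lt (Nat.lt_succ_self m))
    have hdvd := orderOf_dvd_of_pow_eq_one h1
    obtain ⟨j, hj, hord⟩ := (Nat.dvd_prime_pow hp).1 hdvd
    have hj2 : j = m + 2 := by
      by_contra hne2
      have hjle : j ≤ m + 1 := by omega
      exact hne (orderOf_dvd_iff_pow_eq_one.1 (hord ▸ pow_dvd_pow p hjle))
    have : orderOf w = p ^ (m + 2) := by rw [hord, hj2]
    exact this ▸ IsPrimitiveRoot.orderOf w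
end Zeta

section Zeta2
variable (F : Type) [Field F] [IsAlgClosed F] [CharZero F] (p : ℕ)

noncomputable def zetaAux (hp : p.Prime) : (n : ℕ) → {z : F // IsPrimitiveRoot z (p ^ n)}
  | 0 => ⟨1, by simpa using IsPrimitiveRoot.one⟩
  | n + 1 => ⟨Classical.choose (zeta_step F p hp n (zetaAux hp n).2),
      (Classical.choose_spec (zeta_step F p hp n (zetaAux hp n).2)).1⟩

noncomputable def zeta (hp : p.Prime) (n : ℕ) : F := (zetaAux F p hp n).1

lemma zeta_prim (hp : p.Prime) (n : ℕ) : IsPrimitiveRoot (zeta F p hp n) (p ^ n) :=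
  (zetaAux F p hp n).2

lemma zeta_compat (hp : p.Prime) (n : ℕ) : zeta F p hp (n + 1) ^ p = zeta F p hp n :=
  (Classical.choose_spec (zeta_step F p hp n (zetaAux F p hp n).2)).2

lemma zeta_compat_iter (hp : p.Prime) (n d : ℕ) :
    zeta F p hp (n + d) ^ p ^ d = zeta F p hp n := by
  induction d with
  | zero => simp
  | succ d ih =>
    rw [pow_succ', pow_mul, show n + (d + 1) = (n + d) + 1 from rfl, zeta_compat, ih]

lemma zeta_le_pow (hp : p.Prime) {n m : ℕ} (h : n ≤ m) :
    zeta F p hp m ^ p ^ (m - n) = zeta F p hp n := by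
  have := zeta_compat_iter F p hp n (m - n)
  rwa [Nat.add_sub_cancel' h] at this

end Zeta2

section BSet
variable (F : Type) [Field F] [IsAlgClosed F] [CharZero F] (p : ℕ)

/-- the level-`n` basis set: powers of `zeta n` below `φ(p^n)`. -/
noncomputable def BLevel (hp : p.Prime) (n : ℕ) : Set F :=
  Set.range (fun i : Fin (Nat.totient (p ^ n)) => zeta F p hp n ^ (i : ℕ))

noncomputable def BSet (hp : p.Prime) : Set F := ⋃ n, BLevel F p hp n

lemma totient_pow_succ (hp : p.Prime) {n : ℕ} (hn : 1 ≤ n) :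
    Nat.totient (p ^ (n + 1)) = p * Nat.totient (p ^ n) := by
  rw [Nat.totient_prime_pow hp (by omega), Nat.totient_prime_pow hp (by omega),
    Nat.add_sub_cancel, ← mul_assoc, ← pow_succ']
  congr 2
  omega

lemma BLevel_mono (hp : p.Prime) (n : ℕ) : BLevel F p hp n ⊆ BLevel F p hp (n + 1) := by
  rintro x ⟨i, rfl⟩
  have hpi : p * (i : ℕ) < Nat.totient (p ^ (n + 1)) := by
    cases Nat.eq_zero_or_pos n with
    | inl h =>
      subst h
      have : (i : ℕ) = 0 := by have h := i.2; simp only [pow_zero, Nat.totient_one] at h; omega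
      rw [this]
      simp only [Nat.mul_zero]
      rw [pow_one]
      exact Nat.totient_pos.2 hp.pos
    | inr h =>
      rw [totient_pow_succ p hp h]
      exact (Nat.mul_lt_mul_left hp.pos).2 i.2
  refine ⟨⟨p * (i : ℕ), hpi⟩, ?_⟩
  show zeta F p hp (n + 1) ^ (p * (i : ℕ)) = zeta F p hp n ^ (i : ℕ)
  rw [mul_comm, pow_mul', zeta_compat]

lemma BLevel_monotone (hp : p.Prime) : Monotone (BLevel F p hp) := by
  exact monotone_nat_of_le_succ (BLevel_mono F p hp)

end BSet

section LinInd
variable (F : Type) [Field F] [IsAlgClosed F] [CharZero F] (p : ℕ)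

lemma minpoly_zeta_natDegree (hp : p.Prime) (n : ℕ) :
    (minpoly ℚ (zeta F p hp n)).natDegree = Nat.totient (p ^ n) := by
  rw [← Polynomial.cyclotomic_eq_minpoly_rat (zeta_prim F p hp n) (pow_pos hp.pos n),
    Polynomial.natDegree_cyclotomic]

lemma BLevel_linearIndependent (hp : p.Prime) (n : ℕ) :
    LinearIndependent ℚ (fun x => x : BLevel F p hp n → F) := by
  have h := linearIndependent_pow (K := ℚ) (zeta F p hp n)
  rw [minpoly_zeta_natDegree F p hp n] at h
  exact (linearIndepOn_id_range_iff (LinearIndependent.injective h)).mpr h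

lemma BSet_linearIndependent (hp : p.Prime) :
    LinearIndependent ℚ (fun x => x : BSet F p hp → F) := by
  have := linearIndepOn_iUnion_of_directed (R := ℚ) (v := (id : F → F))
    ((BLevel_monotone F p hp).directed_le) (BLevel_linearIndependent F p hp)
  exact this

lemma BSet_countable (hp : p.Prime) : (BSet F p hp).Countable :=
  Set.countable_iUnion fun n => (Set.finite_range _).countable

lemma BSet_infinite (hp : p.Prime) : (BSet F p hp).Infinite := by
  apply Set.infinite_of_injective_forall_mem
    (f := fun k : ℕ => zeta F p hp (k + 2))
  · intro a b hab
    have ha := zeta_prim F p hp (a + 2)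
    have hb := zeta_prim F p hp (b + 2)
    have : (p : ℕ) ^ (a + 2) = p ^ (b + 2) := by
      rw [ha.eq_orderOf, hb.eq_orderOf]; exact congrArg orderOf hab
    have := Nat.pow_right_injective hp.two_le this
    omega
  · intro k
    refine Set.mem_iUnion.2 ⟨k + 2, ?_⟩
    have h1 : 1 < Nat.totient (p ^ (k + 2)) := by
      rw [Nat.totient_prime_pow hp (by omega)]
      have h2 : 2 ≤ p ^ (k + 2 - 1) := by
        calc 2 ≤ p := hp.two_le
        _ ≤ p ^ (k + 1) := Nat.le_self_pow (by omega) p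
        _ = p ^ (k + 2 - 1) := by norm_num
      have : 1 ≤ p - 1 := by have := hp.two_le; omega
      calc 1 < 2 * 1 := by norm_num
      _ ≤ p ^ (k + 2 - 1) * (p - 1) := Nat.mul_le_mul h2 this
    exact ⟨⟨1, h1⟩, by simp⟩

end LinInd

section Loc
variable (K : Type) [Field K] [CharZero K] (p : ℕ)

noncomputable def philoc (hpK : (p : K) ≠ 0) : Localization.Away (p : ℤ) →+* K :=
  Localization.awayLift (Int.castRingHom K) (p : ℤ)
    (isUnit_iff_exists_inv.mpr ⟨(p : K)⁻¹, by simpa using mul_inv_cancel₀ hpK⟩)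

lemma philoc_mk (hpK : (p : K) ≠ 0) (a : ℤ) (j : ℕ) :
    philoc K p hpK (Localization.mk a ⟨(p : ℤ) ^ j, j, rfl⟩) = (a : K) * ((p : K)⁻¹) ^ j := by
  have := Localization.awayLift_mk (A := K) (Int.castRingHom K) (p : ℤ) a ((p : K)⁻¹)
    (by simpa using mul_inv_cancel₀ hpK) j
  simpa [philoc] using this

lemma philoc_rep (hpK : (p : K) ≠ 0) (z : Localization.Away (p : ℤ)) :
    ∃ (a : ℤ) (j : ℕ), philoc K p hpK z = (a : K) * ((p : K)⁻¹) ^ j := by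
  obtain ⟨⟨a, s⟩, rfl⟩ : ∃ y : ℤ × (Submonoid.powers (p : ℤ)), Localization.mk y.1 y.2 = z :=
    Localization.induction_on z fun y => ⟨y, rfl⟩
  obtain ⟨j, hj⟩ := s.2
  have hs : s = ⟨(p : ℤ) ^ j, j, rfl⟩ := Subtype.ext hj.symm
  exact ⟨a, j, by rw [hs, philoc_mk]⟩

lemma philoc_int (hpK : (p : K) ≠ 0) (a : ℤ) :
    philoc K p hpK (algebraMap ℤ (Localization.Away (p : ℤ)) a) = (a : K) :=
  IsLocalization.Away.lift_eq (x := ((p : ℕ) : ℤ)) (g := Int.castRingHom K)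
    (isUnit_iff_exists_inv.mpr ⟨(p : K)⁻¹, by simpa using mul_inv_cancel₀ hpK⟩) a

lemma philoc_injective (hpK : (p : K) ≠ 0) : Function.Injective (philoc K p hpK) := by
  rw [injective_iff_map_eq_zero]
  intro z hz
  obtain ⟨⟨a, s⟩, rfl⟩ : ∃ y : ℤ × (Submonoid.powers (p : ℤ)), Localization.mk y.1 y.2 = z :=
    Localization.induction_on z fun y => ⟨y, rfl⟩
  obtain ⟨j, hj⟩ := s.2
  have hs : s = ⟨(p : ℤ) ^ j, j, rfl⟩ := Subtype.ext hj.symm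
  rw [hs, philoc_mk] at hz
  have hpj : ((p : K)⁻¹) ^ j ≠ 0 := pow_ne_zero _ (inv_ne_zero hpK)
  have ha : (a : K) = 0 := by
    rcases mul_eq_zero.1 hz with h | h
    · exact h
    · exact absurd h hpj
  have : a = 0 := by exact_mod_cast ha
  rw [hs, this, Localization.mk_zero]

end Loc

section Span
variable (F : Type) [Field F] [IsAlgClosed F] [CharZero F] (p : ℕ) [hpf : Fact p.Prime]

lemma hpF : (p : F) ≠ 0 := Nat.cast_ne_zero.2 hpf.out.ne_zero

noncomputable local instance algLocF : Algebra (Localization.Away (p : ℤ)) F :=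
  (philoc F p (hpF F p)).toAlgebra

noncomputable local instance algLocQ : Algebra (Localization.Away (p : ℤ)) ℚ :=
  (philoc ℚ p (Nat.cast_ne_zero.2 hpf.out.ne_zero)).toAlgebra

lemma algebraMap_eq_philoc :
    algebraMap (Localization.Away (p : ℤ)) F = philoc F p (hpF F p) := rfl

local instance towerLoc : IsScalarTower (Localization.Away (p : ℤ)) ℚ F := by
  apply IsScalarTower.of_algebraMap_eq'
  apply IsLocalization.ringHom_ext (Submonoid.powers ((p : ℕ) : ℤ))
  exact RingHom.ext_int _ _

lemma pow_mem_span (n k : ℕ) :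
    zeta F p hpf.out n ^ k ∈
      Submodule.span (Localization.Away (p : ℤ)) (BLevel F p hpf.out n) := by
  have hp := hpf.out
  induction k using Nat.strong_induction_on with
  | _ k ih =>
  rcases lt_or_ge k (Nat.totient (p ^ n)) with hk | hk
  · exact Submodule.subset_span ⟨⟨k, hk⟩, rfl⟩
  · cases n with
    | zero =>
      have h1 : zeta F p hp 0 = 1 := rfl
      rw [h1, one_pow]
      exact Submodule.subset_span ⟨⟨0, by simp⟩, by simp [h1]⟩
    | succ m =>
      set ζ := zeta F p hp (m + 1) with hζ
      set q := p ^ m with hqdef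
      have hq : 0 < q := pow_pos hp.pos m
      have htot : Nat.totient (p ^ (m + 1)) = q * (p - 1) := by
        rw [Nat.totient_prime_pow hp (Nat.succ_pos m)]
        simp [hqdef]
      have hkr : k = (k - q * (p - 1)) + q * (p - 1) :=
        (Nat.sub_add_cancel (by rw [htot] at hk; exact hk)).symm
      set r := k - q * (p - 1) with hrdef
      have hz1 : ζ ^ q = zeta F p hp 1 := by
        have := zeta_compat_iter F p hp 1 m
        rwa [add_comm] at this
      have hprim1 : IsPrimitiveRoot (zeta F p hp 1) p := by
        have := zeta_prim F p hp 1; rwa [pow_one] at this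
      have hsum : ∑ j ∈ Finset.range p, ζ ^ (q * j) = 0 := by
        have hgeo := hprim1.geom_sum_eq_zero hp.one_lt
        calc ∑ j ∈ Finset.range p, ζ ^ (q * j)
            = ∑ j ∈ Finset.range p, (ζ ^ q) ^ j := by
              refine Finset.sum_congr rfl fun j _ => ?_
              rw [pow_mul]
          _ = 0 := by rw [hz1]; exact hgeo
      have hp1 : p - 1 + 1 = p := Nat.succ_pred_eq_of_pos hp.pos
      rw [← hp1, Finset.sum_range_succ] at hsum
      have hsplit : ζ ^ (q * (p - 1)) = -∑ j ∈ Finset.range (p - 1), ζ ^ (q * j) :=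
        eq_neg_of_add_eq_zero_right hsum
      have hkey : ζ ^ k = -∑ j ∈ Finset.range (p - 1), ζ ^ (r + q * j) := by
        calc ζ ^ k = ζ ^ r * ζ ^ (q * (p - 1)) := by rw [← pow_add, ← hkr]
          _ = ζ ^ r * -∑ j ∈ Finset.range (p - 1), ζ ^ (q * j) := by rw [hsplit]
          _ = -∑ j ∈ Finset.range (p - 1), ζ ^ r * ζ ^ (q * j) := by
              rw [mul_neg, Finset.mul_sum]
          _ = -∑ j ∈ Finset.range (p - 1), ζ ^ (r + q * j) := by
              simp [pow_add]
      rw [hkey]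
      apply Submodule.neg_mem
      apply Submodule.sum_mem
      intro j hj
      apply ih
      have hjlt : j < p - 1 := Finset.mem_range.1 hj
      have : q * j < q * (p - 1) := (Nat.mul_lt_mul_left hq).2 hjlt
      omega

lemma pow_mem_span' (n k : ℕ) :
    zeta F p hpf.out n ^ k ∈
      Submodule.span (Localization.Away (p : ℤ)) (BSet F p hpf.out) :=
  Submodule.span_mono (Set.subset_iUnion (BLevel F p hpf.out) n) (pow_mem_span F p n k)

end Span

section Span2
variable (F : Type) [Field F] [IsAlgClosed F] [CharZero F] (p : ℕ) [hpf : Fact p.Prime]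
attribute [local instance] algLocF algLocQ towerLoc

lemma one_mem_BSet : (1 : F) ∈ BSet F p hpf.out :=
  Set.mem_iUnion.2 ⟨0, ⟨⟨0, by simp⟩, by simp⟩⟩

lemma prod_case {n m i j : ℕ} (h : n ≤ m) :
    zeta F p hpf.out n ^ i * zeta F p hpf.out m ^ j ∈
      Submodule.span (Localization.Away (p : ℤ)) (BSet F p hpf.out) := by
  have hz : zeta F p hpf.out m ^ p ^ (m - n) = zeta F p hpf.out n := zeta_le_pow F p hpf.out h
  rw [← hz, ← pow_mul, ← pow_add]
  exact pow_mem_span' F p m _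

lemma mul_mem_spanB {x y : F} (hx : x ∈ BSet F p hpf.out) (hy : y ∈ BSet F p hpf.out) :
    x * y ∈ Submodule.span (Localization.Away (p : ℤ)) (BSet F p hpf.out) := by
  obtain ⟨n, i, rfl⟩ := Set.mem_iUnion.1 hx
  obtain ⟨m, j, rfl⟩ := Set.mem_iUnion.1 hy
  rcases le_total n m with h | h
  · exact prod_case F p h
  · rw [mul_comm]
    exact prod_case F p h

lemma mem_H_pow (n : ℕ) : zeta F p hpf.out n ∈ {x : F | ∃ n : ℕ, x ^ p ^ n = 1} :=
  ⟨n, (zeta_prim F p hpf.out n).pow_eq_one⟩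

/-- the span of `BSet` as a set coincides with the subring. -/
lemma span_eq_closure :
    (Submodule.span (Localization.Away (p : ℤ)) (BSet F p hpf.out) : Set F) =
      (Subring.closure ({x : F | ∃ n : ℕ, x ^ p ^ n = 1} ∪ {(p : F)⁻¹}) : Set F) := by
  have hp := hpf.out
  set Rc := Subring.closure ({x : F | ∃ n : ℕ, x ^ p ^ n = 1} ∪ {(p : F)⁻¹}) with hRc
  have hpinv : (p : F)⁻¹ ∈ Rc :=
    Subring.subset_closure (Set.mem_union_right _ rfl)
  apply Set.Subset.antisymm
  · -- span ⊆ closure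
    let T : Submodule (Localization.Away (p : ℤ)) F :=
      { carrier := Rc
        add_mem' := fun h1 h2 => add_mem h1 h2
        zero_mem' := zero_mem _
        smul_mem' := fun z x hx => by
          obtain ⟨a, jj, hrep⟩ := philoc_rep F p (hpF F p) z
          show z • x ∈ Rc
          rw [Algebra.smul_def, algebraMap_eq_philoc, hrep]
          exact mul_mem (mul_mem (intCast_mem Rc a) (pow_mem hpinv jj)) hx }
    have hsub : Submodule.span (Localization.Away (p : ℤ)) (BSet F p hp) ≤ T := by
      apply Submodule.span_le.2
      rintro x hx
      obtain ⟨n, i, rfl⟩ := Set.mem_iUnion.1 hx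
      exact pow_mem (Subring.subset_closure (Set.mem_union_left _ (mem_H_pow F p n))) _
    exact fun x hx => hsub hx
  · -- closure ⊆ span
    have hmulle : Submodule.span (Localization.Away (p : ℤ)) (BSet F p hp) *
        Submodule.span (Localization.Away (p : ℤ)) (BSet F p hp) ≤
        Submodule.span (Localization.Away (p : ℤ)) (BSet F p hp) := by
      rw [Submodule.span_mul_span]
      apply Submodule.span_le.2
      rintro z ⟨x, hx, y, hy, rfl⟩
      exact mul_mem_spanB F p hx hy
    let SR : Subring F :=
      { carrier := ↑(Submodule.span (Localization.Away (p : ℤ)) (BSet F p hp))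
        one_mem' := Submodule.subset_span (one_mem_BSet F p)
        mul_mem' := fun ha hb => hmulle (Submodule.mul_mem_mul ha hb)
        add_mem' := fun ha hb => add_mem ha hb
        zero_mem' := zero_mem _
        neg_mem' := fun ha => neg_mem ha }
    have hcl : Rc ≤ SR := by
      apply Subring.closure_le.2
      rintro x (⟨n, hxn⟩ | hxinv)
      · haveI : NeZero (p ^ n) := ⟨pow_ne_zero n hp.ne_zero⟩
        obtain ⟨i, _, rfl⟩ := (zeta_prim F p hp n).eq_pow_of_pow_eq_one hxn
        exact pow_mem_span' F p n i
      · have hxeq : x = (p : F)⁻¹ := hxinv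
        have hs : (p : F)⁻¹ =
            (Localization.mk (1 : ℤ) ⟨(p : ℤ) ^ 1, 1, rfl⟩ :
              Localization.Away (p : ℤ)) • (1 : F) := by
          rw [Algebra.smul_def, algebraMap_eq_philoc, philoc_mk]
          simp
        rw [hxeq, hs]
        exact Submodule.smul_mem _ _ (Submodule.subset_span (one_mem_BSet F p))
    exact fun x hx => hcl hx

end Span2

section Span3
variable (F : Type) [Field F] [IsAlgClosed F] [CharZero F] (p : ℕ) [hpf : Fact p.Prime]
attribute [local instance] algLocF algLocQ towerLoc

lemma BSet_linearIndependent_Zp :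
    LinearIndependent (Localization.Away (p : ℤ))
      (fun x => x : BSet F p hpf.out → F) := by
  have hq : ((p : ℕ) : ℚ) ≠ 0 := Nat.cast_ne_zero.2 hpf.out.ne_zero
  have hinj : Function.Injective fun r : Localization.Away (p : ℤ) => r • (1 : ℚ) := by
    have h1 : (fun r : Localization.Away (p : ℤ) => r • (1 : ℚ)) = philoc ℚ p hq :=
      funext fun r => by rw [Algebra.smul_def, mul_one]; rfl
    rw [h1]
    exact philoc_injective ℚ p hq
  exact (BSet_linearIndependent F p hpf.out).restrict_scalars hinj

noncomputable def theBasis :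
    Module.Basis (BSet F p hpf.out) (Localization.Away (p : ℤ))
      (Submodule.span (Localization.Away (p : ℤ)) (BSet F p hpf.out)) := by
  have b0 := Module.Basis.span (BSet_linearIndependent_Zp F p)
  refine b0.map (LinearEquiv.ofEq _ _ ?_)
  rw [Subtype.range_coe]

lemma nonempty_addEquiv :
    Nonempty ((Subring.closure ({x : F | ∃ n : ℕ, x ^ p ^ n = 1} ∪ {(p : F)⁻¹})) ≃+
      DirectSum ℕ (fun _ => Localization.Away (p : ℤ))) := by
  haveI := (BSet_countable F p hpf.out).to_subtype
  haveI := (BSet_infinite F p hpf.out).to_subtype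
  obtain ⟨d⟩ := nonempty_denumerable (BSet F p hpf.out)
  let e : BSet F p hpf.out ≃ ℕ := d.eqv
  let b2 : Module.Basis ℕ (Localization.Away (p : ℤ))
      (Submodule.span (Localization.Away (p : ℤ)) (BSet F p hpf.out)) :=
    (theBasis F p).reindex e
  let l1 := b2.repr
  let l2 := finsuppLEquivDirectSum (Localization.Away (p : ℤ))
      (Localization.Away (p : ℤ)) ℕ
  have hmem : ∀ y : F,
      (y ∈ Submodule.span (Localization.Away (p : ℤ)) (BSet F p hpf.out)) ↔
      y ∈ Subring.closure ({x : F | ∃ n : ℕ, x ^ p ^ n = 1} ∪ {(p : F)⁻¹}) := by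
    intro y
    have := Set.ext_iff.1 (span_eq_closure F p) y
    exact ⟨fun h => this.1 h, fun h => this.2 h⟩
  let eq1 : (Subring.closure ({x : F | ∃ n : ℕ, x ^ p ^ n = 1} ∪ {(p : F)⁻¹})) ≃+
      Submodule.span (Localization.Away (p : ℤ)) (BSet F p hpf.out) :=
    { toFun := fun x => ⟨x.1, (hmem x.1).2 x.2⟩
      invFun := fun x => ⟨x.1, (hmem x.1).1 x.2⟩
      left_inv := fun x => rfl
      right_inv := fun x => rfl
      map_add' := fun x y => rfl }
  exact ⟨eq1.trans ((l1.trans l2).toAddEquiv)⟩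

lemma BSet_subset_closure {b : F} (hb : b ∈ BSet F p hpf.out) :
    b ∈ Subring.closure ({x : F | ∃ n : ℕ, x ^ p ^ n = 1} ∪ {(p : F)⁻¹}) :=
  (Set.ext_iff.1 (span_eq_closure F p) b).1 (Submodule.subset_span hb)

end Span3

section Minimax

lemma aux_noeth {A : Type} [AddCommGroup A] {B C : AddSubgroup A} (hBC : B ≤ C)
    (h : WellFoundedGT ↥(Set.Icc B C)) :
    ∃ S : Finset A, ↑S ⊆ (C : Set A) ∧ C ≤ B ⊔ AddSubgroup.closure ↑S := by
  classical
  let T : Set ↥(Set.Icc B C) := {D | ∃ S : Finset A, ↑S ⊆ (C : Set A) ∧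
    (D : AddSubgroup A) = B ⊔ AddSubgroup.closure ↑S}
  have hBicc : B ∈ Set.Icc B C := ⟨le_refl B, hBC⟩
  have hTne : T.Nonempty := ⟨⟨B, hBicc⟩, ∅, by simp, by simp⟩
  obtain ⟨m, hmT, hmax⟩ := h.wf.has_min T hTne
  obtain ⟨S, hSC, hmeq⟩ := hmT
  refine ⟨S, hSC, ?_⟩
  by_contra hnle
  obtain ⟨x, hxC, hxnm⟩ := SetLike.not_le_iff_exists.1 hnle
  have hclo : AddSubgroup.closure (↑(insert x S) : Set A) ≤ C := by
    rw [AddSubgroup.closure_le, Finset.coe_insert]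
    exact Set.insert_subset hxC hSC
  have hD'icc : B ⊔ AddSubgroup.closure ↑(insert x S) ∈ Set.Icc B C :=
    ⟨le_sup_left, sup_le hBC hclo⟩
  have hD'T : (⟨_, hD'icc⟩ : ↥(Set.Icc B C)) ∈ T :=
    ⟨insert x S, by rw [Finset.coe_insert]; exact Set.insert_subset hxC hSC, rfl⟩
  apply hmax _ hD'T
  show m < ⟨_, hD'icc⟩
  have hlt : (m : AddSubgroup A) < B ⊔ AddSubgroup.closure ↑(insert x S) := by
    apply lt_of_le_of_ne
    · rw [hmeq]
      exact sup_le_sup_left (AddSubgroup.closure_mono (by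
        rw [Finset.coe_insert]; exact Set.subset_insert x ↑S)) B
    · intro heq
      apply hxnm
      rw [← hmeq] at *
      rw [heq]
      exact AddSubgroup.mem_sup_right (AddSubgroup.subset_closure (by
        rw [Finset.coe_insert]; exact Set.mem_insert x ↑S))
  exact Subtype.coe_lt_coe.1 hlt

lemma aux_artin {A : Type} [AddCommGroup A] {B C : AddSubgroup A} (hBC : B ≤ C)
    (h : WellFoundedLT ↥(Set.Icc B C)) {x : A} (hx : x ∈ C) :
    ∃ k : ℤ, k ≠ 0 ∧ k • x ∈ B := by
  have hCmem : ∀ j : ℕ, AddSubgroup.closure {((j.factorial : ℤ) • x)} ≤ C := by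
    intro j
    rw [AddSubgroup.closure_le, Set.singleton_subset_iff]
    exact AddSubgroup.zsmul_mem C hx _
  let D : ℕ → ↥(Set.Icc B C) := fun m =>
    ⟨B ⊔ AddSubgroup.closure {(((m + 1).factorial : ℤ) • x)},
      ⟨le_sup_left, sup_le hBC (hCmem (m + 1))⟩⟩
  obtain ⟨mE, ⟨m, rfl⟩, hmin⟩ := h.wf.has_min (Set.range D) (Set.range_nonempty D)
  have hfac : (((m + 2).factorial : ℤ)) = ((m : ℤ) + 2) * ((m + 1).factorial : ℤ) := by
    have := Nat.factorial_succ (m + 1)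
    push_cast [this]
    ring
  have hle : D (m + 1) ≤ D m := by
    show (D (m + 1) : AddSubgroup A) ≤ (D m : AddSubgroup A)
    apply sup_le le_sup_left
    rw [AddSubgroup.closure_le, Set.singleton_subset_iff]
    have : (((m + 2).factorial : ℤ)) • x = ((m : ℤ) + 2) • (((m + 1).factorial : ℤ) • x) := by
      rw [← mul_smul, ← hfac]
    show (((m + 1 + 1).factorial : ℤ)) • x ∈ (D m : AddSubgroup A)
    rw [show m + 1 + 1 = m + 2 from rfl, this]
    exact AddSubgroup.zsmul_mem _ (AddSubgroup.mem_sup_right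
      (AddSubgroup.subset_closure (Set.mem_singleton _))) _
  have heq : D (m + 1) = D m := eq_of_le_of_not_lt hle (hmin _ ⟨m + 1, rfl⟩)
  have hmem : (((m + 1).factorial : ℤ)) • x ∈ (D m : AddSubgroup A) :=
    AddSubgroup.mem_sup_right (AddSubgroup.subset_closure (Set.mem_singleton _))
  rw [← heq] at hmem
  obtain ⟨b, hb, c, hc, hbc⟩ := AddSubgroup.mem_sup.1 hmem
  obtain ⟨t, ht⟩ := AddSubgroup.mem_closure_singleton.1 hc
  refine ⟨((m + 1).factorial : ℤ) - t * ((m + 2).factorial : ℤ), ?_, ?_⟩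
  · intro h0
    have hf1 : ((m + 1).factorial : ℤ) ≠ 0 := by
      exact_mod_cast Nat.factorial_ne_zero (m + 1)
    have h1 : ((m + 1).factorial : ℤ) * 1 = ((m + 1).factorial : ℤ) * (t * ((m : ℤ) + 2)) := by
      rw [hfac] at h0
      ring_nf
      ring_nf at h0
      linarith
    have h2 : (1 : ℤ) = t * ((m : ℤ) + 2) := mul_left_cancel₀ hf1 h1
    have h3 : IsUnit ((m : ℤ) + 2) := IsUnit.of_mul_eq_one (a := (m : ℤ) + 2) t (by linarith)
    rcases Int.isUnit_iff.1 h3 with h4 | h4 <;> omega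
  · have hexp : (((m + 1).factorial : ℤ) - t * ((m + 2).factorial : ℤ)) • x =
        (((m + 1).factorial : ℤ)) • x - t • ((((m + 2).factorial : ℤ)) • x) := by
      rw [sub_smul, mul_smul]
    rw [hexp, ht, ← hbc]
    simpa using hb

end Minimax

/-- An (additive) abelian group is minimax if it has a finite chain of subgroups
each of whose factors satisfies the minimal or the maximal condition. -/
def AddCommGroup.IsMinimax (A : Type) [AddCommGroup A] : Prop :=
  ∃ (n : ℕ) (c : Fin (n + 1) → AddSubgroup A), Monotone c ∧ c 0 = ⊥ ∧
    c (Fin.last n) = ⊤ ∧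
    ∀ i : Fin n, WellFoundedLT ↥(Set.Icc (c i.castSucc) (c i.succ)) ∨
      WellFoundedGT ↥(Set.Icc (c i.castSucc) (c i.succ))

/-- Let `F` be an algebraically closed field of characteristic zero, `H ≤ Fˣ` the
group of `p`-power roots of unity, `g = 1/p`, and `R = ℤ[H, g]` the subring of `F`
generated by `H` and `g`. Then the additive group of `R` is isomorphic to a
countably infinite direct sum of copies of `ℤ[1/p]`; in particular it is not
minimax. -/
theorem additive_group_of_quasicyclic_ring (F : Type) [Field F] [IsAlgClosed F]
    [CharZero F] (p : ℕ) (hp : p.Prime) :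
    Nonempty
        ((Subring.closure ({x : F | ∃ n : ℕ, x ^ p ^ n = 1} ∪ {(p : F)⁻¹})) ≃+
          DirectSum ℕ (fun _ => Localization.Away (p : ℤ))) ∧
      ¬ AddCommGroup.IsMinimax
          (Subring.closure ({x : F | ∃ n : ℕ, x ^ p ^ n = 1} ∪ {(p : F)⁻¹})) := by
  haveI hpf : Fact p.Prime := ⟨hp⟩
  constructor
  · exact nonempty_addEquiv F p
  · rintro ⟨n, c, hmono, h0, hlast, hfac⟩
    let V : AddSubgroup (Subring.closure ({x : F | ∃ n : ℕ, x ^ p ^ n = 1} ∪ {(p : F)⁻¹})) →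
        Submodule ℚ F := fun G => Submodule.span ℚ (Subtype.val '' (SetLike.coe G))
    have hfin : ∀ i : Fin (n + 1), FiniteDimensional ℚ (V (c i)) := by
      intro i
      induction i using Fin.induction with
      | zero =>
        rw [h0]
        have hfz : (Subtype.val '' (SetLike.coe
            (⊥ : AddSubgroup (Subring.closure
              ({x : F | ∃ n : ℕ, x ^ p ^ n = 1} ∪ {(p : F)⁻¹}))))).Finite := by
          simp [AddSubgroup.coe_bot]
        exact FiniteDimensional.span_of_finite ℚ hfz
      | succ i ih =>
        have hle : c i.castSucc ≤ c i.succ := hmono (le_of_lt (Fin.castSucc_lt_succ (i := i)))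
        rcases hfac i with hart | hnoe
        · -- artinian interval
          have hV : V (c i.succ) ≤ V (c i.castSucc) := by
            apply Submodule.span_le.2
            rintro y ⟨x, hxmem, rfl⟩
            obtain ⟨k, hk0, hkmem⟩ := aux_artin hle hart hxmem
            have hcast : ((k • x : Subring.closure
                ({x : F | ∃ n : ℕ, x ^ p ^ n = 1} ∪ {(p : F)⁻¹})) : F) = (k : ℚ) • (x : F) := by
              have h1 : ((k • x : Subring.closure
                  ({x : F | ∃ n : ℕ, x ^ p ^ n = 1} ∪ {(p : F)⁻¹})) : F) = k • (x : F) :=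
                map_zsmul (Subring.closure
                  ({x : F | ∃ n : ℕ, x ^ p ^ n = 1} ∪ {(p : F)⁻¹})).subtype k x
              rw [h1, ← Int.cast_smul_eq_zsmul ℚ]
            have hyV : ((k • x : Subring.closure
                ({x : F | ∃ n : ℕ, x ^ p ^ n = 1} ∪ {(p : F)⁻¹})) : F) ∈ V (c i.castSucc) :=
              Submodule.subset_span ⟨_, hkmem, rfl⟩
            have hx : (x : F) = ((k : ℚ))⁻¹ • (((k • x : Subring.closure
                ({x : F | ∃ n : ℕ, x ^ p ^ n = 1} ∪ {(p : F)⁻¹})) : F)) := by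
              rw [hcast, smul_smul, inv_mul_cancel₀ (by exact_mod_cast hk0), one_smul]
            rw [hx]
            exact Submodule.smul_mem _ _ hyV
          exact Submodule.finiteDimensional_of_le hV
        · -- noetherian interval
          obtain ⟨S, hSC, hCle⟩ := aux_noeth hle hnoe
          have hV : V (c i.succ) ≤ V (c i.castSucc) ⊔
              Submodule.span ℚ (Subtype.val '' (↑S : Set ↥(Subring.closure ({x : F | ∃ n : ℕ, x ^ p ^ n = 1} ∪ {(p : F)⁻¹})))) := by
            apply Submodule.span_le.2
            rintro y ⟨x, hxmem, rfl⟩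
            obtain ⟨b, hbB, z, hz, hbz⟩ := AddSubgroup.mem_sup.1 (hCle hxmem)
            have hb' : (b : F) ∈ V (c i.castSucc) := Submodule.subset_span ⟨b, hbB, rfl⟩
            have hz' : (z : F) ∈ Submodule.span ℚ (Subtype.val '' (↑S : Set ↥(Subring.closure ({x : F | ∃ n : ℕ, x ^ p ^ n = 1} ∪ {(p : F)⁻¹})))) := by
              refine AddSubgroup.closure_induction ?_ ?_ ?_ ?_ hz
              · intro w hw; exact Submodule.subset_span ⟨w, hw, rfl⟩
              · show ((0 : Subring.closure
                  ({x : F | ∃ n : ℕ, x ^ p ^ n = 1} ∪ {(p : F)⁻¹})) : F) ∈ _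
                simp
              · intro a b _ _ ha hb
                show ((a : F) + (b : F)) ∈ _
                exact add_mem ha hb
              · intro a _ ha
                show (-(a : F)) ∈ _
                exact neg_mem ha
            rw [← hbz]
            show ((b : F) + (z : F)) ∈ _
            exact add_mem (Submodule.mem_sup_left hb') (Submodule.mem_sup_right hz')
          haveI : FiniteDimensional ℚ
              (Submodule.span ℚ (Subtype.val '' (↑S : Set ↥(Subring.closure ({x : F | ∃ n : ℕ, x ^ p ^ n = 1} ∪ {(p : F)⁻¹}))))) :=
            FiniteDimensional.span_of_finite ℚ ((S.finite_toSet).image _)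
          exact Submodule.finiteDimensional_of_le hV
    have htop := hfin (Fin.last n)
    rw [hlast] at htop
    have hBsub : ∀ b ∈ BSet F p hp, b ∈ V ⊤ := by
      intro b hb
      have hbR : b ∈ Subring.closure ({x : F | ∃ n : ℕ, x ^ p ^ n = 1} ∪ {(p : F)⁻¹}) :=
        BSet_subset_closure F p hb
      exact Submodule.subset_span ⟨⟨b, hbR⟩, trivial, rfl⟩
    let f : BSet F p hp → ↥(V ⊤) := fun x => ⟨x.1, hBsub x.1 x.2⟩
    have hfli : LinearIndependent ℚ f :=
      LinearIndependent.of_comp (V ⊤).subtype (by exact BSet_linearIndependent F p hp)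
    haveI := (BSet_infinite F p hp).to_subtype
    have hlt := hfli.lt_aleph0_of_finiteDimensional
    have hge : Cardinal.aleph0 ≤ Cardinal.mk (BSet F p hp) := Cardinal.infinite_iff.1 inferInstance
    exact absurd hlt (not_lt.2 hge)
end

section
/- Let R = ℤ[H × ⟨g⟩] where H is the group of all p-power roots of unity in an algebraically closed field of characteristic 0 and g = 1/p, and let q ≠ p be a prime. Then the chain of ideals {Rq^n : n ≥ 0} is an infinite strictly descending chain in which each quotient Rq^n / Rq^{n+1} is infinite. -/
/-!
Every generator of `R` becomes an algebraic integer after multiplication by a power of `p`, so `R`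
lies in the integral closure of `ℤ[1/p]`; there `q` is not a unit, since `p ^ m / q` is not an
algebraic integer. Hence `Rq^(n+1) < Rq^n`, and `Rq^n / Rq^(n+1) ≅ R / Rq` because `R` is a domain.
For distinct `p^k`-th roots of unity `x` and `y`, `x - y` divides `p ^ k` up to a unit among the
algebraic integers, so `q` does not divide `x - y` in `R`; as there are infinitely many `p`-power
roots of unity, `R / Rq` is infinite.
-/

section QuotientOfPowers

variable {A : Type*} [CommRing A]

theorem infinite_quotient_span_singleton_of_dvd_sub {ι : Type*} [Infinite ι] {a : A} {v : ι → A}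
    (hv : ∀ i j, a ∣ v i - v j → i = j) : Infinite (A ⧸ Ideal.span {a}) :=
  Infinite.of_injective (Ideal.Quotient.mk _ ∘ v) fun i j hij =>
    hv i j <| Ideal.mem_span_singleton.1 <| Ideal.Quotient.eq.1 hij

theorem infinite_span_pow_quotient_span_pow_succ [IsDomain A] {a : A} (ha : a ≠ 0)
    [Infinite (A ⧸ Ideal.span {a})] (n : ℕ) :
    Infinite (Ideal.span {a ^ n} ⧸
      Submodule.comap (Ideal.span {a ^ n}).subtype (Ideal.span {a ^ (n + 1)})) := by
  have hsmul : Ideal.span {a} • ⊤ =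
      Submodule.comap (Ideal.span {a ^ n}).subtype (Ideal.span {a ^ (n + 1)}) := by
    ext x
    rw [Submodule.mem_smul_top_iff, Submodule.mem_comap, smul_eq_mul,
      Ideal.span_singleton_mul_span_singleton, ← pow_succ']
    rfl
  rw [← hsmul, ← Ideal.span_singleton_pow]
  exact Infinite.of_injective _ (Ideal.quotEquivPowQuotPowSuccEquiv ⟨a, rfl⟩
    (by rwa [ne_eq, Ideal.span_singleton_eq_bot]) n).injective

end QuotientOfPowers

section IntegralClosureAway

variable {A B : Type*} [CommRing A] [CommRing B] [Algebra A B]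

/-- The integral closure of `A[1/a]` in `B`. -/
def integralClosureAway (a : A) : Subring B where
  carrier := {x | ∃ m : ℕ, IsIntegral A (algebraMap A B a ^ m * x)}
  zero_mem' := ⟨0, by simpa using isIntegral_zero⟩
  one_mem' := ⟨0, by simpa using isIntegral_one⟩
  neg_mem' := fun ⟨m, hm⟩ => ⟨m, by simpa using hm.neg⟩
  add_mem' := by
    rintro x y ⟨m, hm⟩ ⟨k, hk⟩
    refine ⟨m + k, ?_⟩
    have hc (j : ℕ) : IsIntegral A (algebraMap A B a ^ j) := (isIntegral_algebraMap).pow j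
    convert ((hc k).mul hm).add ((hc m).mul hk) using 1
    ring
  mul_mem' := by
    rintro x y ⟨m, hm⟩ ⟨k, hk⟩
    exact ⟨m + k, by convert hm.mul hk using 1; ring⟩

variable {a : A} {x : B}

theorem IsIntegral.mem_integralClosureAway (hx : IsIntegral A x) :
    x ∈ integralClosureAway (B := B) a :=
  ⟨0, by simpa using hx⟩

theorem mem_integralClosureAway_of_mul_eq_one (hx : algebraMap A B a * x = 1) :
    x ∈ integralClosureAway a :=
  ⟨1, by simpa [hx] using isIntegral_one⟩

end IntegralClosureAway

theorem exists_isIntegral_sub_mul_eq_natCast_mul_pow {A B : Type*} [CommRing A] [CommRing B]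
    [IsDomain B] [Algebra A B] {x y : B} (hx : IsIntegral A x) (hy : IsIntegral A y) {N : ℕ}
    (hxy : x ^ N = y ^ N) (hne : x ≠ y) :
    ∃ w, IsIntegral A w ∧ (x - y) * w = N * x ^ (N - 1) := by
  refine ⟨∑ i ∈ Finset.range N, (∑ j ∈ Finset.range i, x ^ j * y ^ (i - 1 - j)) * x ^ (N - 1 - i),
    IsIntegral.sum _ fun i _ => (IsIntegral.sum _ fun j _ =>
      (hx.pow _).mul (hy.pow _)).mul (hx.pow _), ?_⟩
  have hsum : ∑ i ∈ Finset.range N, y ^ i * x ^ (N - 1 - i) = 0 := by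
    have := geom_sum₂_mul y x N
    rwa [hxy, sub_self, mul_eq_zero, sub_eq_zero, or_iff_left hne.symm] at this
  calc (x - y) * ∑ i ∈ Finset.range N,
        (∑ j ∈ Finset.range i, x ^ j * y ^ (i - 1 - j)) * x ^ (N - 1 - i)
      = ∑ i ∈ Finset.range N, (x ^ i - y ^ i) * x ^ (N - 1 - i) := by
        rw [Finset.mul_sum]
        refine Finset.sum_congr rfl fun i _ => ?_
        rw [← geom_sum₂_mul x y i]
        ring
    _ = ∑ i ∈ Finset.range N, (x ^ (N - 1) - y ^ i * x ^ (N - 1 - i)) := by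
        refine Finset.sum_congr rfl fun i hi => ?_
        rw [sub_mul, ← pow_add, Nat.add_sub_cancel' (Nat.le_sub_one_of_lt (Finset.mem_range.1 hi))]
    _ = N * x ^ (N - 1) := by simp [Finset.sum_sub_distrib, hsum]

theorem dvd_of_isIntegral_natCast_mul_eq_natCast {F : Type*} [Field F] [CharZero F] {a b : ℕ}
    {x : F} (hx : IsIntegral ℤ x) (h : (b : F) * x = a) : b ∣ a := by
  rcases eq_or_ne b 0 with rfl | hb
  · rw [Nat.cast_zero, zero_mul, eq_comm, Nat.cast_eq_zero] at h
    rw [h]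
  have hmap : algebraMap ℚ F ((a : ℚ) / b) = x := by
    rw [map_div₀, map_natCast, map_natCast, div_eq_iff (by exact_mod_cast hb), ← h, mul_comm]
  obtain ⟨y, hy⟩ := IsIntegrallyClosed.isIntegral_iff.1 <|
    (isIntegral_algebraMap_iff (algebraMap ℚ F).injective).1 (hmap ▸ hx)
  rw [eq_div_iff (by exact_mod_cast hb), algebraMap_int_eq, eq_intCast] at hy
  exact Int.natCast_dvd_natCast.1 ⟨y, by exact_mod_cast hy.symm.trans (mul_comm _ _)⟩

section PrimePowerRootsOfUnity

variable {F : Type*} [Field F] [CharZero F] {p q : ℕ}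

theorem natCast_mul_ne_one_of_mem_integralClosureAway (hp : p.Prime) (hq : q.Prime) (hne : q ≠ p)
    {t : F} (ht : t ∈ integralClosureAway (p : ℤ)) : (q : F) * t ≠ 1 := by
  obtain ⟨m, hm⟩ := ht
  intro h
  rw [algebraMap_int_eq, eq_intCast, Int.cast_natCast] at hm
  have hdvd : q ∣ p ^ m := dvd_of_isIntegral_natCast_mul_eq_natCast hm <| by
    rw [Nat.cast_pow, mul_left_comm, h, mul_one]
  exact hne <| (Nat.prime_dvd_prime_iff_eq hq hp).1 (hq.dvd_of_dvd_pow hdvd)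

theorem natCast_mul_ne_sub_of_mem_integralClosureAway (hp : p.Prime) (hq : q.Prime)
    (hne : q ≠ p) {t x y : F} (ht : t ∈ integralClosureAway (p : ℤ)) {k : ℕ}
    (hx : x ^ p ^ k = 1) (hy : y ^ p ^ k = 1) (hxy : x ≠ y) : (q : F) * t ≠ x - y := by
  have hN : 0 < p ^ k := pow_pos hp.pos k
  have hx_int : IsIntegral ℤ x := .of_pow hN (hx ▸ isIntegral_one)
  obtain ⟨w, hw, hxyw⟩ := exists_isIntegral_sub_mul_eq_natCast_mul_pow hx_int
    (.of_pow hN (hy ▸ isIntegral_one)) (hx.trans hy.symm) hxy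
  have hp_inv : ((p : F) ^ k)⁻¹ ∈ integralClosureAway (p : ℤ) := by
    rw [← inv_pow]
    exact pow_mem (mem_integralClosureAway_of_mul_eq_one (by simp [hp.ne_zero])) k
  intro h
  refine natCast_mul_ne_one_of_mem_integralClosureAway hp hq hne (t := t * w * x * ((p : F) ^ k)⁻¹)
    (mul_mem (mul_mem (mul_mem ht hw.mem_integralClosureAway) hx_int.mem_integralClosureAway)
      hp_inv) ?_
  calc (q : F) * (t * w * x * ((p : F) ^ k)⁻¹) = (x - y) * w * x * ((p : F) ^ k)⁻¹ := by
        rw [← h]; ring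
    _ = (p ^ k : F) * ((p : F) ^ k)⁻¹ * (x ^ (p ^ k - 1) * x) := by
        rw [hxyw]; push_cast; ring
    _ = x ^ p ^ k := by
        rw [mul_inv_cancel₀ (pow_ne_zero k (by exact_mod_cast hp.ne_zero)), one_mul, ← pow_succ,
          Nat.sub_add_cancel hN]
    _ = 1 := hx

theorem setOf_exists_pow_pow_eq_one_infinite [IsAlgClosed F] (hp : 1 < p) :
    {x : F | ∃ n : ℕ, x ^ p ^ n = 1}.Infinite := by
  have hζ (k : ℕ) : ∃ ζ : F, IsPrimitiveRoot ζ (p ^ k) :=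
    have : NeZero ((p ^ k : ℕ) : F) := ⟨by exact_mod_cast (pow_pos (by omega) k).ne'⟩
    HasEnoughRootsOfUnity.exists_primitiveRoot F (p ^ k)
  choose ζ hζ using hζ
  refine Set.infinite_of_injective_forall_mem (f := ζ) (fun k j hkj => ?_)
    fun k => ⟨k, (hζ k).pow_eq_one⟩
  exact Nat.pow_right_injective hp <|
    show p ^ k = p ^ j by rw [(hζ k).eq_orderOf, (hζ j).eq_orderOf, hkj]

end PrimePowerRootsOfUnity

/-- Let `R = ℤ[H × ⟨g⟩]` be the subring of an algebraically closed field `F` of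
characteristic `0` generated by the `p`-power roots of unity and `g = 1/p`, and
let `q ≠ p` be a prime. Then the ideals `Rq^n` form an infinite strictly
descending chain in which each factor `Rq^n / Rq^(n+1)` is infinite. -/
theorem strictly_descending_chain_of_ideals (F : Type) [Field F] [IsAlgClosed F]
    [CharZero F] (p q : ℕ) (hp : p.Prime) (hq : q.Prime) (hne : q ≠ p) :
    let R := Subring.closure ({x : F | ∃ n : ℕ, x ^ p ^ n = 1} ∪ {(p : F)⁻¹})
    let I : ℕ → Ideal ↥R := fun n => Ideal.span {((q : ↥R)) ^ n}
    ∀ n : ℕ, I (n + 1) < I n ∧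
      Infinite (↥(I n) ⧸ (Submodule.comap (I n).subtype (I (n + 1)))) := by
  intro R I n
  have hR : R ≤ integralClosureAway (p : ℤ) := Subring.closure_le.2 <| by
    rintro x (⟨k, hk⟩ | rfl)
    · exact (IsIntegral.of_pow (pow_pos hp.pos k) (hk ▸ isIntegral_one)).mem_integralClosureAway
    · exact mem_integralClosureAway_of_mul_eq_one (by simp [hp.ne_zero])
  have hq_ne_zero : (q : R) ≠ 0 := by exact_mod_cast hq.ne_zero
  have hq_not_unit : ¬IsUnit (q : R) := fun hu => by
    obtain ⟨t, ht⟩ := isUnit_iff_exists_inv.1 hu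
    exact natCast_mul_ne_one_of_mem_integralClosureAway hp hq hne (hR t.2)
      (by simpa using congrArg Subtype.val ht)
  have : Infinite {x : F | ∃ n : ℕ, x ^ p ^ n = 1} :=
    (setOf_exists_pow_pow_eq_one_infinite hp.one_lt).to_subtype
  have : Infinite (R ⧸ Ideal.span {(q : R)}) := by
    refine infinite_quotient_span_singleton_of_dvd_sub
      (v := fun x : {x : F | ∃ n : ℕ, x ^ p ^ n = 1} =>
        (⟨x, Subring.subset_closure (Or.inl x.2)⟩ : R)) ?_
    rintro ⟨x, kx, hx⟩ ⟨y, ky, hy⟩ ⟨t, ht⟩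
    by_contra hxy
    refine natCast_mul_ne_sub_of_mem_integralClosureAway hp hq hne (hR t.2) (k := kx + ky)
      ?_ ?_ (fun h => hxy (Subtype.ext h)) (by simpa using (congrArg Subtype.val ht).symm)
    · rw [pow_add, pow_mul, hx, one_pow]
    · rw [pow_add, mul_comm, pow_mul, hy, one_pow]
  exact ⟨Ideal.span_singleton_lt_span_singleton.2 ⟨pow_ne_zero n hq_ne_zero, q, hq_not_unit,
    pow_succ _ n⟩, infinite_span_pow_quotient_span_pow_succ hq_ne_zero n⟩
end

section
/- Let A be a torsion-free abelian group. If A has an infinite strictly ascending chain A_1 < A_2 < … of isolated subgroups, then there exist subgroups C ≤ B ≤ A such that B/C is isomorphic to an infinite direct sum of nontrivial abelian groups. -/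
/-- Let `A` be a torsion-free abelian group with an infinite strictly ascending
chain of isolated subgroups. Then `A` has subgroups `C ≤ B` such that `B/C` is
isomorphic to an infinite direct sum of nontrivial abelian groups. -/
theorem section_direct_sum_of_ascending_isolated_chain (A : Type) [AddCommGroup A]
    (htf : ∀ a : A, a ≠ 0 → ∀ n : ℕ, 0 < n → n • a ≠ 0)
    (c : ℕ → AddSubgroup A) (hmono : StrictMono c)
    (hiso : ∀ i : ℕ, ∀ a : A, ∀ n : ℕ, 0 < n → n • a ∈ c i → a ∈ c i) :
    ∃ B C : AddSubgroup A, C ≤ B ∧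
      ∃ (G : ℕ → Type) (inst : ∀ i, AddCommGroup (G i)),
        (∀ i, Nontrivial (G i)) ∧
        Nonempty ((↥B ⧸ C.addSubgroupOf B) ≃+
          @DirectSum ℕ G (fun i => (inst i).toAddCommMonoid)) := by
  have hlt : ∀ i, c i < c (i + 1) := fun i => hmono (Nat.lt_succ_self i)
  choose a hamem hanot using fun i => SetLike.exists_of_lt (hlt i)
  have hli : LinearIndependent ℤ a := by
    rw [linearIndependent_iff]
    intro l hl
    by_contra hne
    have hsupp : l.support.Nonempty := Finsupp.support_nonempty_iff.mpr hne
    set k := l.support.max' hsupp with hkdef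
    have hk : k ∈ l.support := l.support.max'_mem hsupp
    have hsum : ∑ i ∈ l.support, l i • a i = 0 := by
      rwa [Finsupp.linearCombination_apply, Finsupp.sum] at hl
    have hmem : l k • a k ∈ c k := by
      have heq : l k • a k + ∑ i ∈ l.support.erase k, l i • a i = 0 :=
        (Finset.add_sum_erase _ (fun i => l i • a i) hk).trans hsum
      have : l k • a k = -∑ i ∈ l.support.erase k, l i • a i :=
        eq_neg_of_add_eq_zero_left heq
      rw [this]
      refine neg_mem (sum_mem fun i hi => ?_)
      have hik : i < k :=
        lt_of_le_of_ne (l.support.le_max' i (Finset.mem_of_mem_erase hi))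
          (Finset.ne_of_mem_erase hi)
      exact AddSubgroup.zsmul_mem _ (hmono.monotone hik (hamem i)) _
    have hlk : l k ≠ 0 := Finsupp.mem_support_iff.mp hk
    have hnat : (l k).natAbs • a k ∈ c k := by
      rw [← natCast_zsmul]
      rcases Int.natAbs_eq (l k) with h | h
      · rw [← h]; exact hmem
      · have h' : ((l k).natAbs : ℤ) = -(l k) := by omega
        rw [h', neg_zsmul]; exact neg_mem hmem
    exact hanot k (hiso k (a k) _ (Int.natAbs_pos.mpr hlk) hnat)
  refine ⟨(Submodule.span ℤ (Set.range a)).toAddSubgroup, ⊥, bot_le,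
    fun _ => ℤ, fun _ => inferInstance, fun _ => inferInstance, ⟨?_⟩⟩
  have e1 : (↥(Submodule.span ℤ (Set.range a)).toAddSubgroup ⧸
      ((⊥ : AddSubgroup A).addSubgroupOf (Submodule.span ℤ (Set.range a)).toAddSubgroup)) ≃+
      ↥(Submodule.span ℤ (Set.range a)).toAddSubgroup := by
    rw [AddSubgroup.bot_addSubgroupOf]
    exact QuotientAddGroup.quotientBot
  have e2 : (↥(Submodule.span ℤ (Set.range a)) ≃ₗ[ℤ] DirectSum ℕ fun _ : ℕ => ℤ) :=
    (Module.Basis.span hli).repr.trans (finsuppLEquivDirectSum ℤ ℤ ℕ)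
  exact e1.trans e2.toAddEquiv
end
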